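/- arXiv:2311.15144 — 5 statements merged into one kernel-verified Lean document; each statement's English description precedes it below -/
import Mathlib

section
/- Let H = H(n,k,l,n0,t0) with n even, n ≥ 4, k ≥ 2, l ≥ 1. Then the transmission of every cycle vertex v ∈ C in H equals tr_H(v) = (n²/4)(k+n0) + n(2k+t0−2). -/
open scoped Classical

noncomputable def wienerIndex {V : Type} [Fintype V] (G : SimpleGraph V) : ℤ :=
  (∑ u : V, ∑ w : V, (G.dist u w : ℤ)) / 2

noncomputable def deleteVert {V : Type} [Fintype V] (G : SimpleGraph V) (v : V) :
    SimpleGraph {x : V // x ≠ v} :=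
  SimpleGraph.induce {x : V | x ≠ v} G

noncomputable def deltaW {V : Type} [Fintype V] (G : SimpleGraph V) (v : V) : ℤ :=
  wienerIndex G - wienerIndex (deleteVert G v)

noncomputable def ratioR {V : Type} [Fintype V] (G : SimpleGraph V) (m : ℤ) : ℚ :=
  ((Finset.univ.filter fun v : V => deltaW G v = m).card : ℚ) / (Fintype.card V : ℚ)

noncomputable def transmission {V : Type} [Fintype V] (G : SimpleGraph V) (v : V) : ℕ :=
  ∑ u : V, G.dist v u

def solAdjAux {n k : ℕ} {VF : Type} (F : SimpleGraph VF) (S : Set VF) :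
    (Fin n × Fin k) ⊕ (Fin n × VF) → (Fin n × Fin k) ⊕ (Fin n × VF) → Prop
  | Sum.inl (i, a), Sum.inl (j, b) => a = b ∧ (j : ℕ) = ((i : ℕ) + 1) % n
  | Sum.inl (i, _), Sum.inr (j, u) => i = j ∧ u ∈ S
  | Sum.inr (i, u), Sum.inr (j, w) => i = j ∧ F.Adj u w
  | _, _ => False

/-- The graph `H(n,k,l,n0,t0)` of the general construction: `k` disjoint copies of
the cycle `C_n` (whose vertices are the "cycle vertices" `Sum.inl (i,a)`), a copy of
`K_{k,l}` joining `{(i,a) : a ∈ [k]}` to the `i`-th copy of `S ⊆ V(F)`, and `n`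
disjoint copies of `F`. -/
noncomputable def solGraph (n k : ℕ) {VF : Type} (F : SimpleGraph VF) (S : Set VF) :
    SimpleGraph ((Fin n × Fin k) ⊕ (Fin n × VF)) where
  Adj x y := x ≠ y ∧ (solAdjAux F S x y ∨ solAdjAux F S y x)
  symm := ⟨fun _ _ h => ⟨h.1.symm, h.2.symm⟩⟩
  loopless := ⟨fun _ h => h.1 rfl⟩

/-- The vertex set `{v} ∪ V(F_v)` for the cycle vertex `v = (i,a)`. -/
def fvSet (n k : ℕ) {VF : Type} (i : Fin n) (a : Fin k) :
    Set ((Fin n × Fin k) ⊕ (Fin n × VF)) :=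
  {x | x = Sum.inl (i, a) ∨ ∃ u : VF, x = Sum.inr (i, u)}

namespace StmtAux

open SimpleGraph

/-- Generic characterization of distances from a fixed vertex. -/
lemma dist_eq_of_f {V : Type*} (G : SimpleGraph V) (v : V) (f : V → ℕ)
    (hv : f v = 0)
    (hlip : ∀ ⦃x y⦄, G.Adj x y → f y ≤ f x + 1)
    (hdes : ∀ x, x ≠ v → ∃ y, G.Adj x y ∧ f y + 1 ≤ f x) :
    ∀ x, G.dist v x = f x := by
  have key : ∀ m x, f x ≤ m → G.Reachable v x ∧ G.dist v x ≤ f x := by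
    intro m
    induction m with
    | zero =>
      intro x hx
      by_cases hxv : x = v
      · subst hxv; exact ⟨Reachable.refl _, by simp [hv, SimpleGraph.dist_self]⟩
      · obtain ⟨y, _, hy⟩ := hdes x hxv; omega
    | succ m ih =>
      intro x hx
      by_cases hxv : x = v
      · subst hxv; exact ⟨Reachable.refl _, by simp [hv, SimpleGraph.dist_self]⟩
      · obtain ⟨y, hadj, hy⟩ := hdes x hxv
        obtain ⟨hr, hd⟩ := ih y (by omega)
        obtain ⟨p, hp⟩ := hr.exists_walk_length_eq_dist
        refine ⟨hr.trans hadj.symm.reachable, ?_⟩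
        have h2 := SimpleGraph.dist_le (p.concat hadj.symm)
        rw [SimpleGraph.Walk.length_concat, hp] at h2
        omega
  have walkbd : ∀ (x y : V) (p : G.Walk x y), f y ≤ f x + p.length := by
    intro x y p
    induction p with
    | nil => simp
    | cons h q ih =>
      have := hlip h
      simp only [SimpleGraph.Walk.length_cons]
      omega
  intro x
  have hup := (key (f x) x le_rfl).2
  obtain ⟨p, hp⟩ := (key (f x) x le_rfl).1.exists_walk_length_eq_dist
  have := walkbd v x p
  rw [hp, hv] at this
  omega

/-- From a vertex at distance `≥ 1`, there is a neighbor strictly closer to `v`. -/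
lemma exists_adj_dist_lt {V : Type*} {G : SimpleGraph V} {v x : V}
    (h : G.Reachable v x) (hd : 1 ≤ G.dist v x) :
    ∃ y, G.Adj x y ∧ G.dist v y + 1 ≤ G.dist v x := by
  obtain ⟨p, hp⟩ := h.symm.exists_walk_length_eq_dist
  cases p with
  | nil =>
    rw [SimpleGraph.dist_comm] at hd
    simp only [SimpleGraph.Walk.length_nil] at hp
    omega
  | @cons _ y _ hadj q =>
    refine ⟨y, hadj, ?_⟩
    have h1 := SimpleGraph.dist_le q.reverse
    rw [SimpleGraph.Walk.length_reverse] at h1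
    simp only [SimpleGraph.Walk.length_cons] at hp
    have h2 : G.dist v y = G.dist y v := SimpleGraph.dist_comm
    have h3 : G.dist v x = G.dist x v := SimpleGraph.dist_comm
    omega

lemma fin_val_one {n : ℕ} [NeZero n] (hn : 2 ≤ n) : ((1 : Fin n) : ℕ) = 1 := by
  rw [Fin.val_one']; exact Nat.mod_eq_of_lt (by omega)

lemma fin_val_add_one' {n : ℕ} [NeZero n] (hn : 2 ≤ n) (s : Fin n) :
    ((s + 1 : Fin n) : ℕ) = ((s : ℕ) + 1) % n := by
  rw [Fin.add_def, fin_val_one hn]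

lemma fin_val_add_one {n : ℕ} [NeZero n] (hn : 2 ≤ n) (s : Fin n) :
    ((s + 1 : Fin n) : ℕ) = if (s : ℕ) + 1 = n then 0 else (s : ℕ) + 1 := by
  rw [fin_val_add_one' hn]
  by_cases h : (s : ℕ) + 1 = n
  · simp [h]
  · have := s.isLt
    rw [if_neg h, Nat.mod_eq_of_lt (by omega)]

lemma fin_val_sub_one {n : ℕ} [NeZero n] (hn : 2 ≤ n) (s : Fin n) (hs : (s : ℕ) ≠ 0) :
    ((s - 1 : Fin n) : ℕ) = (s : ℕ) - 1 := by
  rw [Fin.sub_def, fin_val_one hn]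
  have hlt := s.isLt
  have h1 : n - 1 + (s : ℕ) = ((s : ℕ) - 1) + n := by omega
  show (n - 1 + (s : ℕ)) % n = (s : ℕ) - 1
  rw [h1, Nat.add_mod_right, Nat.mod_eq_of_lt (by omega)]

/-- Distance on the cycle `C_n` from `0` to `s`. -/
def cycD (n : ℕ) (s : Fin n) : ℕ := min (s : ℕ) (n - (s : ℕ))

lemma cycD_zero {n : ℕ} [NeZero n] : cycD n 0 = 0 := by simp [cycD]

lemma cycD_lip {n : ℕ} [NeZero n] (hn : 2 ≤ n) (s : Fin n) :
    cycD n (s + 1) ≤ cycD n s + 1 ∧ cycD n s ≤ cycD n (s + 1) + 1 := by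
  have hlt := s.isLt
  unfold cycD
  rw [fin_val_add_one hn]
  split <;> omega

lemma cycD_descent {n : ℕ} [NeZero n] (hn : 2 ≤ n) (s : Fin n) (hs : (s : ℕ) ≠ 0) :
    (cycD n (s - 1) + 1 ≤ cycD n s ∧ 2 * (s : ℕ) ≤ n) ∨
    (cycD n (s + 1) + 1 ≤ cycD n s ∧ ¬ 2 * (s : ℕ) ≤ n) := by
  have hlt := s.isLt
  by_cases hc : 2 * (s : ℕ) ≤ n
  · left
    refine ⟨?_, hc⟩
    unfold cycD
    rw [fin_val_sub_one hn s hs]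
    omega
  · right
    refine ⟨?_, hc⟩
    unfold cycD
    rw [fin_val_add_one hn]
    split <;> omega

lemma sum_min_range (m : ℕ) :
    ∑ r ∈ Finset.range (m + m), min r (m + m - r) = m * m := by
  rw [Finset.sum_range_add]
  have h1 : ∑ r ∈ Finset.range m, min r (m + m - r) = ∑ r ∈ Finset.range m, r := by
    refine Finset.sum_congr rfl fun r hr => ?_
    have := Finset.mem_range.mp hr; omega
  have h2 : ∑ r ∈ Finset.range m, min (m + r) (m + m - (m + r))
      = ∑ r ∈ Finset.range m, (m - r) := by
    refine Finset.sum_congr rfl fun r hr => ?_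
    have := Finset.mem_range.mp hr; omega
  rw [h1, h2]
  have h3 : ∑ r ∈ Finset.range m, (m - r) = (∑ r ∈ Finset.range m, r) + m := by
    rw [← Finset.sum_range_reflect (fun r => m - r) m]
    rcases Nat.eq_zero_or_pos m with hm | hm
    · simp [hm]
    · have h4 : ∑ j ∈ Finset.range m, (m - (m - 1 - j)) = ∑ j ∈ Finset.range m, (j + 1) := by
        refine Finset.sum_congr rfl fun j hj => ?_
        have := Finset.mem_range.mp hj; omega
      rw [h4, Finset.sum_add_distrib, Finset.sum_const, Finset.card_range, smul_eq_mul, mul_one]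
  rw [h3]
  have h5 := Finset.sum_range_id_mul_two m
  have h6 : m * (m - 1) + m = m * m := by
    rcases Nat.eq_zero_or_pos m with hm | hm
    · simp [hm]
    · obtain ⟨p, rfl⟩ : ∃ p, m = p + 1 := ⟨m - 1, by omega⟩
      simp only [Nat.add_sub_cancel]
      ring
  omega

lemma cycD_sum {n : ℕ} [NeZero n] (hne : Even n) (i : Fin n) :
    ∑ j : Fin n, cycD n (j - i) = (n / 2) * (n / 2) := by
  have h0 : ∑ j : Fin n, cycD n (j - i) = ∑ s : Fin n, cycD n s := by
    rw [← Equiv.sum_comp (Equiv.subRight i) (fun s => cycD n s)]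
    simp [Equiv.subRight_apply]
  rw [h0]
  have h1 : ∑ s : Fin n, cycD n s = ∑ r ∈ Finset.range n, min r (n - r) :=
    Fin.sum_univ_eq_sum_range (fun r => min r (n - r)) n
  rw [h1]
  obtain ⟨m, rfl⟩ := hne
  rw [sum_min_range m]
  have : (m + m) / 2 = m := by omega
  rw [this]

end StmtAux

theorem stmt_2 (n k l n0 t0 : ℕ) {VF : Type} [Fintype VF] (F : SimpleGraph VF)
    (S : Set VF) (hn : 4 ≤ n) (hneven : Even n) (hk : 2 ≤ k) (hl : 1 ≤ l)
    (hS : S.ncard = l) (hn0 : Fintype.card VF = n0)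
    (hconn : ∀ (i : Fin n) (a : Fin k),
      (SimpleGraph.induce (fvSet n k i a) (solGraph n k F S)).Connected)
    (ht0 : ∀ (i : Fin n) (a : Fin k),
      transmission (SimpleGraph.induce (fvSet n k i a) (solGraph n k F S))
        ⟨Sum.inl (i, a), Or.inl rfl⟩ = t0) :
    ∀ (i : Fin n) (a : Fin k),
      (transmission (solGraph n k F S) (Sum.inl (i, a)) : ℤ) =
        (n : ℤ) ^ 2 / 4 * ((k : ℤ) + (n0 : ℤ)) + (n : ℤ) * (2 * (k : ℤ) + (t0 : ℤ) - 2) := by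
  intro i a
  haveI : NeZero n := ⟨by omega⟩
  have hn2 : 2 ≤ n := by omega
  have hconn' := hconn i a
  have ht0' := ht0 i a
  set Gr : SimpleGraph ((Fin n × Fin k) ⊕ (Fin n × VF)) := solGraph n k F S with hGr
  set GI := SimpleGraph.induce (fvSet n k i a) Gr with hGIdef
  set vI : (fvSet n k (VF := VF) i a) := ⟨Sum.inl (i, a), Or.inl rfl⟩ with hvIdef
  obtain ⟨g, hg⟩ : ∃ g : VF → ℕ, ∀ u, g u =
      GI.dist vI ⟨Sum.inr (i, u), Or.inr ⟨u, rfl⟩⟩ := ⟨_, fun u => rfl⟩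
  have hreach : ∀ x, GI.Reachable vI x := fun x => hconn' vI x
  -- basic facts about g
  have g_pos : ∀ u, 1 ≤ g u := by
    intro u
    rw [hg u]
    refine (hreach _).pos_dist_of_ne ?_
    intro h
    exact absurd (congrArg Subtype.val h) (by simp)
  have g_one_of_mem : ∀ u ∈ S, g u = 1 := by
    intro u hu
    rw [hg u]
    apply SimpleGraph.dist_eq_one_iff_adj.mpr
    show Gr.Adj (Sum.inl (i, a)) (Sum.inr (i, u))
    exact ⟨by simp, Or.inl ⟨rfl, hu⟩⟩
  have g_mem_of_one : ∀ u, g u = 1 → u ∈ S := by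
    intro u h
    rw [hg u] at h
    have hadj := SimpleGraph.dist_eq_one_iff_adj.mp h
    have hadj' : Gr.Adj (Sum.inl (i, a)) (Sum.inr (i, u)) := hadj
    rcases hadj'.2 with h1 | h1
    · exact (h1 : i = i ∧ u ∈ S).2
    · exact False.elim h1
  have g_lip : ∀ u w, F.Adj u w → g w ≤ g u + 1 := by
    intro u w h
    have hadj : GI.Adj ⟨Sum.inr (i, u), Or.inr ⟨u, rfl⟩⟩ ⟨Sum.inr (i, w), Or.inr ⟨w, rfl⟩⟩ := by
      show Gr.Adj (Sum.inr (i, u)) (Sum.inr (i, w))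
      exact ⟨by simp [h.ne], Or.inl ⟨rfl, h⟩⟩
    have h1 := hconn'.dist_triangle (u := vI)
      (v := (⟨Sum.inr (i, u), Or.inr ⟨u, rfl⟩⟩ : (fvSet n k (VF := VF) i a)))
      (w := (⟨Sum.inr (i, w), Or.inr ⟨w, rfl⟩⟩ : (fvSet n k (VF := VF) i a)))
    have h2 := SimpleGraph.dist_eq_one_iff_adj.mpr hadj
    rw [← hg u, ← hg w] at h1
    omega
  -- the distance function
  obtain ⟨f, hfl, hfr⟩ : ∃ f : (Fin n × Fin k) ⊕ (Fin n × VF) → ℕ,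
      (∀ j b, f (Sum.inl (j, b)) = StmtAux.cycD n (j - i) + (if b = a then 0 else 2)) ∧
      (∀ j u, f (Sum.inr (j, u)) = StmtAux.cycD n (j - i) + g u) :=
    ⟨fun x => match x with
      | Sum.inl (j, b) => StmtAux.cycD n (j - i) + (if b = a then 0 else 2)
      | Sum.inr (j, u) => StmtAux.cycD n (j - i) + g u, fun _ _ => rfl, fun _ _ => rfl⟩
  have hdist : ∀ x, Gr.dist (Sum.inl (i, a)) x = f x := by
    apply StmtAux.dist_eq_of_f
    · rw [hfl i a, sub_self, StmtAux.cycD_zero, if_pos rfl]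
    · -- Lipschitz
      have lip2 : ∀ x y, solAdjAux (n := n) F S x y → f y ≤ f x + 1 ∧ f x ≤ f y + 1 := by
        rintro (⟨j, b⟩ | ⟨j, u⟩) (⟨j', b'⟩ | ⟨j', u'⟩) hxy
        · obtain ⟨hb, hj⟩ : b = b' ∧ (j' : ℕ) = ((j : ℕ) + 1) % n := hxy
          subst hb
          have hj' : j' = j + 1 := by
            apply Fin.ext
            rw [StmtAux.fin_val_add_one' hn2, hj]
          subst hj'
          rw [hfl, hfl, add_sub_right_comm j 1 i]
          have := StmtAux.cycD_lip hn2 (j - i)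
          omega
        · obtain ⟨hj, hu⟩ : j = j' ∧ u' ∈ S := hxy
          subst hj
          rw [hfl, hfr, g_one_of_mem u' hu]
          split <;> omega
        · exact False.elim hxy
        · obtain ⟨hj, hadj⟩ : j = j' ∧ F.Adj u u' := hxy
          subst hj
          rw [hfr, hfr]
          have h1 := g_lip _ _ hadj
          have h2 := g_lip _ _ hadj.symm
          omega
      intro x y hxy
      rcases hxy.2 with h | h
      · exact (lip2 x y h).1
      · exact (lip2 y x h).2
    · -- descent
      intro x hxv
      rcases x with ⟨j, b⟩ | ⟨j, u⟩
      · by_cases hj : j = i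
        · have hb : b ≠ a := fun h => hxv (by rw [h, hj])
          have hSne : S.Nonempty := by
            rcases Set.eq_empty_or_nonempty S with h | h
            · rw [h, Set.ncard_empty] at hS; omega
            · exact h
          obtain ⟨u, hu⟩ := hSne
          refine ⟨Sum.inr (j, u), ⟨by simp, Or.inl ⟨rfl, hu⟩⟩, ?_⟩
          rw [hfr, hfl, g_one_of_mem u hu, hj, sub_self, StmtAux.cycD_zero, if_neg hb]
        · have hs0 : ((j - i : Fin n) : ℕ) ≠ 0 := by
            intro h
            exact hj (sub_eq_zero.mp (Fin.ext (by simp [h])))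
          rcases StmtAux.cycD_descent hn2 (j - i) hs0 with ⟨hle, _⟩ | ⟨hle, _⟩
          · refine ⟨Sum.inl (j - 1, b), ⟨?_, Or.inr ⟨rfl, ?_⟩⟩, ?_⟩
            · simp only [ne_eq, Sum.inl.injEq, Prod.mk.injEq, not_and]
              intro h1 _
              have h2 : (1 : Fin n) = 0 := sub_eq_self.mp h1.symm
              have h3 := congrArg Fin.val h2
              rw [StmtAux.fin_val_one hn2] at h3
              simp at h3
            · show (j : ℕ) = (((j - 1 : Fin n) : ℕ) + 1) % n
              conv_lhs => rw [← sub_add_cancel j 1]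
              rw [StmtAux.fin_val_add_one' hn2]
            · rw [hfl, hfl, sub_right_comm j 1 i]
              omega
          · refine ⟨Sum.inl (j + 1, b), ⟨?_, Or.inl ⟨rfl, StmtAux.fin_val_add_one' hn2 j⟩⟩, ?_⟩
            · simp only [ne_eq, Sum.inl.injEq, Prod.mk.injEq, not_and]
              intro h1 _
              have h2 : (1 : Fin n) = 0 := left_eq_add.mp h1
              have h3 := congrArg Fin.val h2
              rw [StmtAux.fin_val_one hn2] at h3
              simp at h3
            · rw [hfl, hfl, add_sub_right_comm j 1 i]
              omega
      · by_cases hgu : g u = 1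
        · refine ⟨Sum.inl (j, a), ⟨by simp, Or.inr ⟨rfl, g_mem_of_one u hgu⟩⟩, ?_⟩
          rw [hfr, hfl, hgu, if_pos rfl]
        · have hgu2 : 2 ≤ g u := by have := g_pos u; omega
          have hd1 : 1 ≤ GI.dist vI ⟨Sum.inr (i, u), Or.inr ⟨u, rfl⟩⟩ := by
            rw [← hg u]; omega
          obtain ⟨y, hyadj, hydist⟩ := StmtAux.exists_adj_dist_lt (hreach _) hd1
          rcases y with ⟨yv, hyv⟩
          rcases hyv with h1 | ⟨w, h1⟩
          · subst h1
            have hadjv : GI.Adj vI ⟨Sum.inr (i, u), Or.inr ⟨u, rfl⟩⟩ := hyadj.symm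
            have hduo := SimpleGraph.dist_eq_one_iff_adj.mpr hadjv
            rw [← hg u] at hduo
            exact absurd hduo hgu
          · subst h1
            have hadj' : Gr.Adj (Sum.inr (i, u)) (Sum.inr (i, w)) := hyadj
            have hFuw : F.Adj u w := by
              rcases hadj'.2 with h2 | h2
              · exact (h2 : i = i ∧ F.Adj u w).2
              · exact (h2 : i = i ∧ F.Adj w u).2.symm
            refine ⟨Sum.inr (j, w), ⟨by simp [hFuw.ne], Or.inl ⟨rfl, hFuw⟩⟩, ?_⟩
            rw [hfr, hfr]
            have hgw : GI.dist vI ⟨Sum.inr (i, w), Or.inr ⟨w, rfl⟩⟩ = g w := (hg w).symm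
            rw [← hg u] at hydist
            rw [hgw] at hydist
            omega
  -- sum of g equals t0
  have hg_sum : ∑ u : VF, g u = t0 := by
    let e : Option VF ≃ (fvSet n k (VF := VF) i a) :=
      { toFun := fun o => match o with
          | none => ⟨Sum.inl (i, a), Or.inl rfl⟩
          | some u => ⟨Sum.inr (i, u), Or.inr ⟨u, rfl⟩⟩
        invFun := fun x => match x with
          | ⟨Sum.inl _, _⟩ => none
          | ⟨Sum.inr (_, u), _⟩ => some u
        left_inv := by rintro (_ | u) <;> rfl
        right_inv := by
          rintro ⟨xv, h1 | ⟨u, h1⟩⟩ <;> subst h1 <;> rfl }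
    simp only [transmission] at ht0'
    rw [← Equiv.sum_comp e (fun x => GI.dist vI x)] at ht0'
    rw [Fintype.sum_option] at ht0'
    have h1 : GI.dist vI (e none) = 0 := by
      rw [show e none = vI from rfl, SimpleGraph.dist_self]
    have h2 : ∀ u, GI.dist vI (e (some u)) = g u := fun u => (hg u).symm
    rw [h1, Finset.sum_congr rfl (fun u _ => h2 u)] at ht0'
    simpa using ht0' 
  -- the main computation, in ℕ
  have hSd := StmtAux.cycD_sum hneven i
  have hIte : ∑ b : Fin k, (if b = a then (0 : ℕ) else 2) = 2 * k - 2 := by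
    have hpt : ∀ b : Fin k, ((if b = a then (0 : ℕ) else 2) + (if b = a then 2 else 0)) = 2 :=
      fun b => by split <;> rfl
    have hsum2 : ∑ b : Fin k, ((if b = a then (0 : ℕ) else 2) + (if b = a then 2 else 0))
        = 2 * k := by
      rw [Finset.sum_congr rfl fun b _ => hpt b, Finset.sum_const, Finset.card_univ,
        Fintype.card_fin, smul_eq_mul, mul_comm]
    have h3 : ∑ b : Fin k, (if b = a then (2 : ℕ) else 0) = 2 := by simp
    rw [Finset.sum_add_distrib, h3] at hsum2
    omega
  have htrans : transmission Gr (Sum.inl (i, a)) =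
      k * ((n / 2) * (n / 2)) + n * (2 * k - 2) + (n0 * ((n / 2) * (n / 2)) + n * t0) := by
    simp only [transmission]
    rw [Finset.sum_congr rfl (fun x _ => hdist x)]
    rw [Fintype.sum_sum_type]
    rw [Fintype.sum_prod_type, Fintype.sum_prod_type]
    have hA : ∀ j : Fin n, ∑ b : Fin k, f (Sum.inl (j, b))
        = k * StmtAux.cycD n (j - i) + (2 * k - 2) := by
      intro j
      rw [Finset.sum_congr rfl (fun b _ => hfl j b), Finset.sum_add_distrib, Finset.sum_const,
        Finset.card_univ, Fintype.card_fin, smul_eq_mul, hIte]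
    have hB : ∀ j : Fin n, ∑ u : VF, f (Sum.inr (j, u))
        = n0 * StmtAux.cycD n (j - i) + t0 := by
      intro j
      rw [Finset.sum_congr rfl (fun u _ => hfr j u), Finset.sum_add_distrib, Finset.sum_const,
        Finset.card_univ, hn0, smul_eq_mul, hg_sum]
    rw [Finset.sum_congr rfl fun j _ => hA j, Finset.sum_congr rfl fun j _ => hB j]
    rw [Finset.sum_add_distrib, Finset.sum_add_distrib, Finset.sum_const, Finset.sum_const,
      Finset.card_univ, Fintype.card_fin, ← Finset.mul_sum, ← Finset.mul_sum, hSd,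
      smul_eq_mul, smul_eq_mul]
  -- final cast computation
  obtain ⟨m, hm⟩ := hneven
  have hn2d : n / 2 = m := by omega
  rw [htrans, hn2d]
  have h2k : (((2 * k - 2 : ℕ)) : ℤ) = 2 * (k : ℤ) - 2 := by omega
  push_cast
  rw [h2k]
  have h4 : ((n : ℤ)) ^ 2 = 4 * ((m : ℤ) * (m : ℤ)) := by
    have hmn : (n : ℤ) = 2 * (m : ℤ) := by omega
    rw [hmn]; ring
  rw [h4, Int.mul_ediv_cancel_left _ (by norm_num)]
  ring
end

section
/- Let H = H(n,k,l,n0,t0) with n odd, n ≥ 3, k ≥ 2, l ≥ 1. Then the transmission of every cycle vertex v ∈ C in H equals tr_H(v) = ((n²−1)/4)(k+n0) + n(2k+t0−2). -/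
open scoped Classical

variable {n k : ℕ} {VF : Type} {F : SimpleGraph VF} {S : Set VF}

lemma solGraph_adj_cycle (hn : 3 ≤ n) (a : Fin k) {i i' : Fin n}
    (h : (i':ℕ) = ((i:ℕ)+1) % n ∨ (i:ℕ) = ((i':ℕ)+1) % n) :
    (solGraph n k F S).Adj (Sum.inl (i,a)) (Sum.inl (i',a)) := by
  have hne : i ≠ i' := by
    rintro rfl
    have hi := i.isLt
    have h' : (i:ℕ) = ((i:ℕ)+1) % n := by tauto
    rcases lt_or_ge ((i:ℕ)+1) n with h1 | h1
    · rw [Nat.mod_eq_of_lt h1] at h'; omega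
    · rw [show (i:ℕ)+1 = n by omega, Nat.mod_self] at h'; omega
  refine ⟨?_, ?_⟩
  · intro e
    exact hne (by injection e with e'; exact congrArg Prod.fst e')
  · rcases h with h | h
    · exact Or.inl ⟨rfl, h⟩
    · exact Or.inr ⟨rfl, h⟩

lemma solGraph_adj_KS {j : Fin n} (b : Fin k) {s : VF} (hs : s ∈ S) :
    (solGraph n k F S).Adj (Sum.inl (j,b)) (Sum.inr (j,s)) :=
  ⟨by simp, Or.inl ⟨rfl, hs⟩⟩

lemma solGraph_adj_F {j : Fin n} {u w : VF} (h : F.Adj u w) :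
    (solGraph n k F S).Adj (Sum.inr (j,u)) (Sum.inr (j,w)) := by
  refine ⟨?_, Or.inl ⟨rfl, h⟩⟩
  intro e
  apply h.ne
  injection e with e'
  exact congrArg Prod.snd e'

def cdist (n : ℕ) (i j : Fin n) : ℕ := min (Nat.dist i.val j.val) (n - Nat.dist i.val j.val)

lemma cdist_self (n : ℕ) (i : Fin n) : cdist n i i = 0 := by
  simp [cdist, Nat.dist_self]

lemma cdist_step_cases' {n : ℕ} {j1 : Fin n} {j2 : ℕ}
    (h : j2 = ((j1 : ℕ) + 1) % n) :
    (j2 = (j1:ℕ) + 1) ∨ ((j1:ℕ) = n - 1 ∧ j2 = 0) := by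
  have hj1 := j1.isLt
  rcases lt_or_ge ((j1:ℕ)+1) n with h1 | h1
  · left; rw [Nat.mod_eq_of_lt h1] at h; exact h
  · right
    have h2 : (j1:ℕ) + 1 = n := by omega
    rw [h2, Nat.mod_self] at h
    omega

lemma cdist_lip {n : ℕ} (i : Fin n) {j1 j2 : Fin n}
    (h : (j2 : ℕ) = ((j1 : ℕ) + 1) % n) :
    cdist n i j2 ≤ cdist n i j1 + 1 ∧ cdist n i j1 ≤ cdist n i j2 + 1 := by
  have hi := i.isLt; have h1 := j1.isLt; have h2 := j2.isLt
  rcases cdist_step_cases' h with h' | ⟨ha, hb⟩ <;>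
    simp only [cdist, Nat.dist] <;> omega


theorem cdist_exists_step {n : ℕ} (hn : 3 ≤ n) (i j : Fin n) (h : cdist n i j ≠ 0) :
    ∃ i' : Fin n, ((i':ℕ) = ((i:ℕ)+1) % n ∨ (i:ℕ) = ((i':ℕ)+1) % n) ∧
      cdist n i' j + 1 = cdist n i j := by
  have hn0 : 0 < n := by omega
  have hi := i.isLt; have hj := j.isLt
  have hne : (i:ℕ) ≠ (j:ℕ) := by
    intro e
    apply h
    simp only [cdist, Nat.dist]
    omega
  by_cases hij : (i:ℕ) < (j:ℕ)
  · by_cases hside : Nat.dist i.val j.val ≤ n - Nat.dist i.val j.val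
    · refine ⟨⟨(i:ℕ)+1, by omega⟩, Or.inl (Nat.mod_eq_of_lt (by omega)).symm, ?_⟩
      simp only [cdist, Nat.dist, Fin.val_mk] at hside h ⊢
      omega
    · by_cases h0 : (i:ℕ) = 0
      · refine ⟨⟨n-1, by omega⟩, Or.inr ?_, ?_⟩
        · show (i:ℕ) = (n-1+1)%n
          rw [show n-1+1 = n by omega, Nat.mod_self, h0]
        · simp only [cdist, Nat.dist, Fin.val_mk] at hside h ⊢
          omega
      · refine ⟨⟨(i:ℕ)-1, by omega⟩, Or.inr ?_, ?_⟩
        · show (i:ℕ) = ((i:ℕ)-1+1)%n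
          rw [show (i:ℕ)-1+1 = (i:ℕ) by omega, Nat.mod_eq_of_lt hi]
        · simp only [cdist, Nat.dist, Fin.val_mk] at hside h ⊢
          omega
  · have hij' : (j:ℕ) < (i:ℕ) := by omega
    by_cases hside : Nat.dist i.val j.val ≤ n - Nat.dist i.val j.val
    · refine ⟨⟨(i:ℕ)-1, by omega⟩, Or.inr ?_, ?_⟩
      · show (i:ℕ) = ((i:ℕ)-1+1)%n
        rw [show (i:ℕ)-1+1 = (i:ℕ) by omega, Nat.mod_eq_of_lt hi]
      · simp only [cdist, Nat.dist, Fin.val_mk] at hside h ⊢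
        omega
    · by_cases h0 : (i:ℕ) = n-1
      · refine ⟨⟨0, by omega⟩, Or.inl ?_, ?_⟩
        · show (0:ℕ) = ((i:ℕ)+1)%n
          rw [show (i:ℕ)+1 = n by omega, Nat.mod_self]
        · simp only [cdist, Nat.dist, Fin.val_mk] at hside h ⊢
          omega
      · refine ⟨⟨(i:ℕ)+1, by omega⟩, Or.inl (Nat.mod_eq_of_lt (by omega)).symm, ?_⟩
        simp only [cdist, Nat.dist, Fin.val_mk] at hside h ⊢
        omega

lemma solGraph_cycle_walk (hn : 3 ≤ n) (a : Fin k) :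
    ∀ (N : ℕ) (i j : Fin n), cdist n i j = N →
      ∃ w : (solGraph n k F S).Walk (Sum.inl (i,a)) (Sum.inl (j,a)), w.length = N := by
  intro N
  induction N with
  | zero =>
    intro i j hc
    have hij : i = j := by
      have hi := i.isLt; have hj := j.isLt
      simp only [cdist, Nat.dist] at hc
      exact Fin.ext (by omega)
    subst hij
    exact ⟨SimpleGraph.Walk.nil, rfl⟩
  | succ N ih =>
    intro i j hc
    obtain ⟨i', hcond, hstep⟩ := cdist_exists_step hn i j (by omega)
    obtain ⟨w, hw⟩ := ih i' j (by omega)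
    exact ⟨SimpleGraph.Walk.cons (solGraph_adj_cycle hn a hcond) w, by simp [hw]⟩

noncomputable def colG (n k : ℕ) {VF : Type} (F : SimpleGraph VF) (S : Set VF)
    (j : Fin n) (a : Fin k) : SimpleGraph (fvSet n k j a (VF := VF)) :=
  SimpleGraph.induce (fvSet n k j a) (solGraph n k F S)

noncomputable def d0 (n k : ℕ) {VF : Type} (F : SimpleGraph VF) (S : Set VF)
    (j : Fin n) (a : Fin k) (u : VF) : ℕ :=
  (colG n k F S j a).dist ⟨Sum.inl (j,a), Or.inl rfl⟩ ⟨Sum.inr (j,u), Or.inr ⟨u, rfl⟩⟩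

lemma d0_S (j : Fin n) (a : Fin k) {s : VF} (hs : s ∈ S) : d0 n k F S j a s = 1 := by
  rw [d0, SimpleGraph.dist_eq_one_iff_adj]
  exact solGraph_adj_KS a hs

lemma d0_lip (hconn : (colG n k F S j a).Connected) {u w : VF} (h : F.Adj u w) :
    d0 n k F S j a u ≤ d0 n k F S j a w + 1 := by
  have hadj : (colG n k F S j a).Adj ⟨Sum.inr (j,w), Or.inr ⟨w, rfl⟩⟩
      ⟨Sum.inr (j,u), Or.inr ⟨u, rfl⟩⟩ := solGraph_adj_F h.symm
  calc d0 n k F S j a u ≤ d0 n k F S j a w +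
      (colG n k F S j a).dist ⟨Sum.inr (j,w), Or.inr ⟨w, rfl⟩⟩ ⟨Sum.inr (j,u), Or.inr ⟨u, rfl⟩⟩ :=
        hconn.dist_triangle
    _ = d0 n k F S j a w + 1 := by rw [SimpleGraph.dist_eq_one_iff_adj.mpr hadj]

lemma d0_walk (j : Fin n) (a : Fin k) (u : VF) (hconn : (colG n k F S j a).Connected) :
    ∃ w : (solGraph n k F S).Walk (Sum.inl (j,a)) (Sum.inr (j,u)), w.length = d0 n k F S j a u := by
  obtain ⟨p, hp⟩ := hconn.exists_walk_length_eq_dist ⟨Sum.inl (j,a), Or.inl rfl⟩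
    ⟨Sum.inr (j,u), Or.inr ⟨u, rfl⟩⟩
  exact ⟨p.map (SimpleGraph.Embedding.induce (fvSet n k j a)).toHom,
    (SimpleGraph.Walk.length_map _ _).trans hp⟩

noncomputable def Dfun (n k : ℕ) {VF : Type} (F : SimpleGraph VF) (S : Set VF)
    (i : Fin n) (a : Fin k) : (Fin n × Fin k) ⊕ (Fin n × VF) → ℕ
  | Sum.inl (j, b) => cdist n i j + (if b = a then 0 else 2)
  | Sum.inr (j, u) => cdist n i j + d0 n k F S j a u

lemma Dfun_lip (hn : 3 ≤ n)
    (hconn : ∀ (j : Fin n) (a : Fin k), (colG n k F S j a).Connected)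
    (i : Fin n) (a : Fin k) {x y : (Fin n × Fin k) ⊕ (Fin n × VF)}
    (h : (solGraph n k F S).Adj x y) :
    Dfun n k F S i a y ≤ Dfun n k F S i a x + 1 := by
  obtain ⟨hne, haux | haux⟩ := h
  · rcases x with ⟨j1, b1⟩ | ⟨j1, u1⟩ <;> rcases y with ⟨j2, b2⟩ | ⟨j2, u2⟩ <;>
      simp only [solAdjAux] at haux
    · obtain ⟨hb, hstep⟩ := haux
      subst hb
      have := (cdist_lip i hstep).1
      simp only [Dfun]
      omega
    · obtain ⟨hj, hu⟩ := haux
      subst hj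
      rw [Dfun, Dfun, d0_S j1 a hu]
      split <;> omega
    · obtain ⟨hj, hadj⟩ := haux
      subst hj
      have := d0_lip (hconn j1 a) hadj.symm
      simp only [Dfun]
      omega
  · rcases x with ⟨j1, b1⟩ | ⟨j1, u1⟩ <;> rcases y with ⟨j2, b2⟩ | ⟨j2, u2⟩ <;>
      simp only [solAdjAux] at haux
    · obtain ⟨hb, hstep⟩ := haux
      subst hb
      have := (cdist_lip i hstep).2
      simp only [Dfun]
      omega
    · obtain ⟨hj, hu⟩ := haux
      subst hj
      rw [Dfun, Dfun, d0_S _ a hu]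
      split <;> omega
    · obtain ⟨hj, hadj⟩ := haux
      subst hj
      have := d0_lip (j := j2) (hconn j2 a) hadj
      simp only [Dfun]
      omega

lemma Dfun_le_walk (hn : 3 ≤ n)
    (hconn : ∀ (j : Fin n) (a : Fin k), (colG n k F S j a).Connected)
    (i : Fin n) (a : Fin k) {x y : (Fin n × Fin k) ⊕ (Fin n × VF)}
    (w : (solGraph n k F S).Walk x y) :
    Dfun n k F S i a y ≤ Dfun n k F S i a x + w.length := by
  induction w with
  | nil => simp
  | cons h p ih =>
    have := Dfun_lip hn hconn i a h
    rw [SimpleGraph.Walk.length_cons]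
    omega

lemma dist_eq_Dfun (hn : 3 ≤ n) (hS : S.Nonempty)
    (hconn : ∀ (j : Fin n) (a : Fin k), (colG n k F S j a).Connected)
    (i : Fin n) (a : Fin k) (x : (Fin n × Fin k) ⊕ (Fin n × VF)) :
    (solGraph n k F S).dist (Sum.inl (i,a)) x = Dfun n k F S i a x := by
  have hupper : ∃ w : (solGraph n k F S).Walk (Sum.inl (i,a)) x,
      w.length = Dfun n k F S i a x := by
    rcases x with ⟨j, b⟩ | ⟨j, u⟩
    · obtain ⟨w, hw⟩ := solGraph_cycle_walk hn a (cdist n i j) i j rfl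
      by_cases hb : b = a
      · subst hb
        exact ⟨w, by simp [Dfun, hw]⟩
      · obtain ⟨s, hs⟩ := hS
        refine ⟨w.append (SimpleGraph.Walk.cons (solGraph_adj_KS a hs)
          (SimpleGraph.Walk.cons ((solGraph_adj_KS b hs).symm) SimpleGraph.Walk.nil)), ?_⟩
        simp [Dfun, hw, hb]
    · obtain ⟨w1, hw1⟩ := solGraph_cycle_walk hn a (cdist n i j) i j rfl
      obtain ⟨w2, hw2⟩ := d0_walk j a u (hconn j a)
      exact ⟨w1.append w2, by simp [Dfun, hw1, hw2]⟩
  obtain ⟨w, hw⟩ := hupper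
  have hub := SimpleGraph.dist_le w
  obtain ⟨p, hp⟩ := w.reachable.exists_walk_length_eq_dist
  have hlb := Dfun_le_walk hn hconn i a p
  have h0 : Dfun n k F S i a (Sum.inl (i,a)) = 0 := by
    simp [Dfun, cdist, Nat.dist_self]
  omega


def colEquiv (n k : ℕ) (VF : Type) (j : Fin n) (a : Fin k) :
    (Unit ⊕ VF) ≃ ↥(fvSet n k j a (VF := VF)) where
  toFun x := match x with
    | Sum.inl _ => ⟨Sum.inl (j,a), Or.inl rfl⟩
    | Sum.inr u => ⟨Sum.inr (j,u), Or.inr ⟨u, rfl⟩⟩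
  invFun x := match x with
    | ⟨Sum.inl _, _⟩ => Sum.inl ()
    | ⟨Sum.inr (_, u), _⟩ => Sum.inr u
  left_inv x := by rcases x with x | u <;> rfl
  right_inv x := by
    obtain ⟨y, hy⟩ := x
    rcases y with p | ⟨p1, p2⟩
    · cases hy with
      | inl h => exact Subtype.ext h.symm
      | inr h =>
        obtain ⟨u, hu⟩ := h
        simp at hu
    · cases hy with
      | inl h => simp at h
      | inr h =>
        obtain ⟨u, hu⟩ := h
        injection hu with h'
        injection h' with h1 h2
        subst h1
        subst h2
        rfl

lemma sum_d0 [Fintype VF] (j : Fin n) (a : Fin k) :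
    ∑ u : VF, d0 n k F S j a u = transmission (colG n k F S j a) ⟨Sum.inl (j,a), Or.inl rfl⟩ := by
  rw [transmission, ← Equiv.sum_comp (colEquiv n k VF j a)]
  rw [Fintype.sum_sum_type]
  have h1 : ∀ x : Unit, (colG n k F S j a).dist ⟨Sum.inl (j,a), Or.inl rfl⟩
      ((colEquiv n k VF j a) (Sum.inl x)) = 0 := by
    intro x
    exact SimpleGraph.dist_self
  simp only [h1, Finset.sum_const]
  have h2 : ∀ u : VF, (colG n k F S j a).dist ⟨Sum.inl (j,a), Or.inl rfl⟩
      ((colEquiv n k VF j a) (Sum.inr u)) = d0 n k F S j a u := fun u => rfl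
  simp [h2, d0]

lemma sum_min_range (m : ℕ) :
    ∑ t ∈ Finset.range (2*m+1), min t (2*m+1 - t) = m * (m+1) := by
  have key : ∑ t ∈ Finset.range (2*m+1), min t (2*m+1-t) =
      ∑ t ∈ Finset.Ico 0 (m+1), min t (2*m+1-t) +
        ∑ t ∈ Finset.Ico (m+1) (2*m+1), min t (2*m+1-t) := by
    rw [Finset.sum_Ico_consecutive (fun t => min t (2*m+1-t))
      (Nat.zero_le (m+1)) (by omega : m+1 ≤ 2*m+1), Finset.range_eq_Ico]
  rw [key]
  have hA : ∑ t ∈ Finset.Ico 0 (m+1), min t (2*m+1-t) = ∑ t ∈ Finset.range (m+1), t := by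
    rw [← Finset.range_eq_Ico]
    refine Finset.sum_congr rfl fun t ht => ?_
    simp only [Finset.mem_range] at ht
    omega
  have hB : ∑ t ∈ Finset.Ico (m+1) (2*m+1), min t (2*m+1-t) = ∑ s ∈ Finset.range m, (m - s) := by
    rw [Finset.sum_Ico_eq_sum_range]
    rw [show 2*m+1 - (m+1) = m by omega]
    refine Finset.sum_congr rfl fun s hs => ?_
    simp only [Finset.mem_range] at hs
    omega
  rw [hA, hB]
  clear key
  have g2 : ∑ s ∈ Finset.range m, (m - s) = ∑ s ∈ Finset.range m, (s+1) := by
    rw [← Finset.sum_range_reflect (fun j => j + 1) m]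
    refine Finset.sum_congr rfl fun s hs => ?_
    simp only [Finset.mem_range] at hs
    omega
  rw [g2, Finset.sum_add_distrib, Finset.sum_const, Finset.card_range, smul_eq_mul, mul_one]
  have g1 := Finset.sum_range_id_mul_two (m+1)
  have g4 := Finset.sum_range_id_mul_two m
  refine Nat.eq_of_mul_eq_mul_right (show 0 < 2 by norm_num) ?_
  have expand : (∑ t ∈ Finset.range (m+1), t + (∑ s ∈ Finset.range m, s + m)) * 2 =
      (∑ t ∈ Finset.range (m+1), t) * 2 + ((∑ s ∈ Finset.range m, s) * 2 + 2*m) := by ring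
  rw [expand, g1, g4]
  cases m with
  | zero => rfl
  | succ mm =>
    simp only [Nat.add_sub_cancel]
    ring

lemma sum_cdist {n : ℕ} (hn : 3 ≤ n) (m : ℕ) (hm : n = 2*m+1) (i : Fin n) :
    ∑ j : Fin n, cdist n i j = m * (m+1) := by
  have : NeZero n := ⟨by omega⟩
  have h1 : ∀ t : Fin n, cdist n i (i + t) = min t.val (n - t.val) := by
    intro t
    have hi := i.isLt; have ht := t.isLt
    simp only [cdist, Fin.val_add]
    rcases lt_or_ge ((i:ℕ) + (t:ℕ)) n with hlt | hge
    · rw [Nat.mod_eq_of_lt hlt]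
      simp only [Nat.dist]
      omega
    · have hmod : ((i:ℕ) + (t:ℕ)) % n = (i:ℕ) + (t:ℕ) - n := by
        rw [Nat.mod_eq_sub_mod hge]
        exact Nat.mod_eq_of_lt (by omega)
      rw [hmod]
      simp only [Nat.dist]
      omega
  calc ∑ j : Fin n, cdist n i j = ∑ t : Fin n, cdist n i (i + t) :=
        (Equiv.sum_comp (Equiv.addLeft i) (fun j => cdist n i j)).symm
    _ = ∑ t : Fin n, min t.val (n - t.val) := Finset.sum_congr rfl fun t _ => h1 t
    _ = ∑ t ∈ Finset.range n, min t (n - t) := Fin.sum_univ_eq_sum_range (fun t => min t (n - t)) n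
    _ = m * (m+1) := by rw [hm]; exact sum_min_range m


theorem stmt_3 (n k l n0 t0 : ℕ) {VF : Type} [Fintype VF] (F : SimpleGraph VF)
    (S : Set VF) (hn : 3 ≤ n) (hnodd : Odd n) (hk : 2 ≤ k) (hl : 1 ≤ l)
    (hS : S.ncard = l) (hn0 : Fintype.card VF = n0)
    (hconn : ∀ (i : Fin n) (a : Fin k),
      (SimpleGraph.induce (fvSet n k i a) (solGraph n k F S)).Connected)
    (ht0 : ∀ (i : Fin n) (a : Fin k),
      transmission (SimpleGraph.induce (fvSet n k i a) (solGraph n k F S))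
        ⟨Sum.inl (i, a), Or.inl rfl⟩ = t0) :
    ∀ (i : Fin n) (a : Fin k),
      (transmission (solGraph n k F S) (Sum.inl (i, a)) : ℤ) =
        ((n : ℤ) ^ 2 - 1) / 4 * ((k : ℤ) + (n0 : ℤ)) + (n : ℤ) * (2 * (k : ℤ) + (t0 : ℤ) - 2) := by
  intro i a
  have hSne : S.Nonempty := Set.nonempty_of_ncard_ne_zero (by omega)
  obtain ⟨m, hm'⟩ := hnodd
  have hm : n = 2*m+1 := by omega
  have hconn' : ∀ (j : Fin n) (b : Fin k), (colG n k F S j b).Connected := hconn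
  have hdist := dist_eq_Dfun hn hSne hconn' i a
  have hT : transmission (solGraph n k F S) (Sum.inl (i,a)) = ∑ x, Dfun n k F S i a x := by
    rw [transmission]
    exact Finset.sum_congr rfl (fun x _ => hdist x)
  have hSig := sum_cdist hn m hm i
  have hite : (∑ b : Fin k, if b = a then (0:ℕ) else 2) = 2*k - 2 := by
    have h1 : (∑ b : Fin k, ((if b = a then (0:ℕ) else 2) + (if b = a then 2 else 0))) = 2*k := by
      have he : ∀ b : Fin k, ((if b = a then (0:ℕ) else 2) + (if b = a then 2 else 0)) = 2 := by
        intro b; split <;> rfl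
      rw [Finset.sum_congr rfl (fun b _ => he b), Finset.sum_const, Finset.card_univ,
        Fintype.card_fin, smul_eq_mul, mul_comm]
    rw [Finset.sum_add_distrib] at h1
    have h2 : (∑ b : Fin k, if b = a then (2:ℕ) else 0) = 2 := by
      rw [Finset.sum_ite_eq' Finset.univ a (fun _ => (2:ℕ))]
      simp
    omega
  have hinl : ∑ p : Fin n × Fin k, Dfun n k F S i a (Sum.inl p) = k * (m*(m+1)) + n * (2*k-2) := by
    rw [Fintype.sum_prod_type]
    simp only [Dfun]
    have he : ∀ j : Fin n, (∑ b : Fin k, (cdist n i j + if b = a then 0 else 2))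
        = k * cdist n i j + (2*k-2) := by
      intro j
      rw [Finset.sum_add_distrib, hite, Finset.sum_const, Finset.card_univ,
        Fintype.card_fin, smul_eq_mul]
    rw [Finset.sum_congr rfl (fun j _ => he j), Finset.sum_add_distrib, ← Finset.mul_sum, hSig,
      Finset.sum_const, Finset.card_univ, Fintype.card_fin, smul_eq_mul]
  have hcol : ∀ j : Fin n, ∑ u : VF, d0 n k F S j a u = t0 := by
    intro j
    rw [sum_d0 j a]
    exact ht0 j a
  have hinr : ∑ p : Fin n × VF, Dfun n k F S i a (Sum.inr p) = n0 * (m*(m+1)) + n * t0 := by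
    rw [Fintype.sum_prod_type]
    simp only [Dfun]
    have he : ∀ j : Fin n, (∑ u : VF, (cdist n i j + d0 n k F S j a u))
        = n0 * cdist n i j + t0 := by
      intro j
      rw [Finset.sum_add_distrib, hcol j, Finset.sum_const, Finset.card_univ, hn0, smul_eq_mul]
    rw [Finset.sum_congr rfl (fun j _ => he j), Finset.sum_add_distrib, ← Finset.mul_sum, hSig,
      Finset.sum_const, Finset.card_univ, Fintype.card_fin, smul_eq_mul]
  have htrans : transmission (solGraph n k F S) (Sum.inl (i,a)) =
      k * (m*(m+1)) + n * (2*k-2) + (n0 * (m*(m+1)) + n * t0) := by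
    rw [hT, Fintype.sum_sum_type, hinl, hinr]
  rw [htrans]
  have hnz : (n:ℤ) = 2*(m:ℤ)+1 := by exact_mod_cast congrArg (Nat.cast : ℕ → ℤ) hm
  have hdiv : ((n:ℤ)^2 - 1)/4 = (m:ℤ)*((m:ℤ)+1) := by
    rw [hnz, show (2*(m:ℤ)+1)^2 - 1 = 4*((m:ℤ)*((m:ℤ)+1)) by ring]
    exact Int.mul_ediv_cancel_left _ (by norm_num)
  have hcast : ((k * (m*(m+1)) + n * (2*k-2) + (n0 * (m*(m+1)) + n * t0) : ℕ) : ℤ)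
      = (k:ℤ) * ((m:ℤ)*((m:ℤ)+1)) + (n:ℤ)*(2*(k:ℤ)-2) + ((n0:ℤ)*((m:ℤ)*((m:ℤ)+1)) + (n:ℤ)*(t0:ℤ)) := by
    push_cast [Nat.cast_sub (show 2 ≤ 2*k by omega)]
    ring
  rw [hcast, hdiv]
  ring
end

section
/- For the cycle C_11 on 11 vertices, every vertex v satisfies W(C_11 − v) = W(C_11); that is, R_0(C_11) = 1 and every vertex of C_11 is a Šoltés vertex. -/
open scoped Classical

-- Lipschitz walk lower bound
lemma lip_walk {V : Type} {G : SimpleGraph V} {f : V → ℕ}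
    (hf : ∀ x y : V, G.Adj x y → f y ≤ f x + 1) :
    ∀ {u w : V} (p : G.Walk u w), f w ≤ f u + p.length := by
  intro u w p
  induction p with
  | nil => simp
  | @cons a b c h p ih =>
    rw [SimpleGraph.Walk.length_cons]
    have := hf a b h
    omega

-- cycle walks
lemma cycle_walk : ∀ k : ℕ, ∀ u w : Fin 11, (w - u).val = k →
    ∃ p : (SimpleGraph.cycleGraph 11).Walk u w, p.length = k := by
  intro k
  induction k with
  | zero =>
    intro u w h
    have : w = u := by
      have : w - u = 0 := Fin.ext h
      have := sub_eq_zero.mp this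
      exact this
    subst this
    exact ⟨SimpleGraph.Walk.nil, rfl⟩
  | succ k ih =>
    intro u w h
    have key : ∀ u w : Fin 11, (w - u).val ≠ 0 →
        ((w - 1) - u).val = (w - u).val - 1 ∧ (SimpleGraph.cycleGraph 11).Adj (w - 1) w := by
      decide
    have hk := key u w (by omega)
    obtain ⟨p, hp⟩ := ih u (w - 1) (by omega)
    exact ⟨p.concat hk.2, by rw [SimpleGraph.Walk.length_concat, hp]⟩

lemma cycle_lip : ∀ u x y : Fin 11, (SimpleGraph.cycleGraph 11).Adj x y →
    min ((y - u).val) ((u - y).val) ≤ min ((x - u).val) ((u - x).val) + 1 := by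
  decide

lemma cycle_dist (u w : Fin 11) :
    (SimpleGraph.cycleGraph 11).dist u w = min ((w - u).val) ((u - w).val) := by
  obtain ⟨p, hp⟩ := cycle_walk _ u w rfl
  obtain ⟨q, hq⟩ := cycle_walk _ w u rfl
  apply le_antisymm
  · exact le_min (hp ▸ SimpleGraph.dist_le p)
      (by rw [SimpleGraph.dist_comm]; exact hq ▸ SimpleGraph.dist_le q)
  · obtain ⟨r, hr⟩ := SimpleGraph.Reachable.exists_walk_length_eq_dist (G := SimpleGraph.cycleGraph 11) ⟨p⟩
    have := lip_walk (f := fun x => min ((x - u).val) ((u - x).val)) (cycle_lip u) r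
    simpa [hr] using this
-- adjacency in deleteVert
lemma del_adj {v : Fin 11} (x y : {x : Fin 11 // x ≠ v}) :
    (deleteVert (SimpleGraph.cycleGraph 11) v).Adj x y ↔
      (SimpleGraph.cycleGraph 11).Adj x.1 y.1 := Iff.rfl

lemma del_walk (v : Fin 11) : ∀ k : ℕ, ∀ x w : Fin 11, ∀ hx : x ≠ v, ∀ hw : w ≠ v,
    (w - v).val = (x - v).val + k →
    ∃ p : (deleteVert (SimpleGraph.cycleGraph 11) v).Walk ⟨x, hx⟩ ⟨w, hw⟩, p.length = k := by
  intro k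
  induction k with
  | zero =>
    intro x w hx hw h
    have hxw : x = w := by
      have : w - v = x - v := Fin.ext (by omega)
      have := sub_left_injective this
      exact this.symm
    subst hxw
    exact ⟨SimpleGraph.Walk.nil, rfl⟩
  | succ k ih =>
    intro x w hx hw h
    have key : ∀ v x w : Fin 11, x ≠ v → w ≠ v → (x - v).val < (w - v).val →
        (w - 1) ≠ v ∧ ((w - 1) - v).val + 1 = (w - v).val ∧
          (SimpleGraph.cycleGraph 11).Adj (w - 1) w := by
      decide
    have hk := key v x w hx hw (by omega)
    obtain ⟨p, hp⟩ := ih x (w - 1) hx hk.1 (by omega)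
    exact ⟨p.concat ((del_adj _ _).mpr hk.2.2), by rw [SimpleGraph.Walk.length_concat, hp]⟩

lemma del_lip : ∀ v x y : Fin 11, x ≠ v → y ≠ v →
    (SimpleGraph.cycleGraph 11).Adj x y →
    Nat.dist ((x - v).val) ((y - v).val) = 1 := by
  decide

lemma del_dist (v : Fin 11) (x w : {x : Fin 11 // x ≠ v}) :
    (deleteVert (SimpleGraph.cycleGraph 11) v).dist x w
      = Nat.dist ((x.1 - v).val) ((w.1 - v).val) := by
  obtain ⟨x, hx⟩ := x
  obtain ⟨w, hw⟩ := w
  -- walk of the right length, in both cases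
  have hwalk : ∃ p : (deleteVert (SimpleGraph.cycleGraph 11) v).Walk ⟨x, hx⟩ ⟨w, hw⟩,
      p.length = Nat.dist ((x - v).val) ((w - v).val) := by
    rcases le_total ((x - v).val) ((w - v).val) with hle | hle
    · obtain ⟨p, hp⟩ := del_walk v ((w - v).val - (x - v).val) x w hx hw (by omega)
      exact ⟨p, by rw [hp, Nat.dist_eq_sub_of_le hle]⟩
    · obtain ⟨p, hp⟩ := del_walk v ((x - v).val - (w - v).val) w x hw hx (by omega)
      exact ⟨p.reverse, by rw [SimpleGraph.Walk.length_reverse, hp, Nat.dist_comm, Nat.dist_eq_sub_of_le hle]⟩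
  obtain ⟨p, hp⟩ := hwalk
  apply le_antisymm
  · exact hp ▸ SimpleGraph.dist_le p
  · obtain ⟨r, hr⟩ := SimpleGraph.Reachable.exists_walk_length_eq_dist
      (G := deleteVert (SimpleGraph.cycleGraph 11) v) ⟨p⟩
    have hlip : ∀ a b : {x : Fin 11 // x ≠ v},
        (deleteVert (SimpleGraph.cycleGraph 11) v).Adj a b →
        Nat.dist ((b.1 - v).val) ((x - v).val) ≤ Nat.dist ((a.1 - v).val) ((x - v).val) + 1 := by
      intro a b hab
      have h1 := del_lip v a.1 b.1 a.2 b.2 ((del_adj a b).mp hab)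
      have := Nat.dist.triangle_inequality ((b.1 - v).val) ((a.1 - v).val) ((x - v).val)
      rw [Nat.dist_comm ((b.1 - v).val) ((a.1 - v).val)] at this
      omega
    have := lip_walk (f := fun t : {x : Fin 11 // x ≠ v} =>
      Nat.dist ((t.1 - v).val) ((x - v).val)) hlip r
    simp only [Nat.dist_self, hr] at this
    rw [Nat.dist_comm]
    simpa using this

lemma wiener_cycle : wienerIndex (SimpleGraph.cycleGraph 11) = 165 := by
  unfold wienerIndex
  simp only [cycle_dist]
  decide

lemma wiener_del (v : Fin 11) :
    wienerIndex (deleteVert (SimpleGraph.cycleGraph 11) v) = 165 := by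
  unfold wienerIndex
  simp only [del_dist]
  fin_cases v <;> decide

lemma wiener_del_any (v : Fin 11) (inst : Fintype {x : Fin 11 // x ≠ v}) :
    @wienerIndex _ inst (deleteVert (SimpleGraph.cycleGraph 11) v) = 165 := by
  convert wiener_del v using 2

theorem stmt_17 :
    (∀ v : Fin 11,
      wienerIndex (deleteVert (SimpleGraph.cycleGraph 11) v)
        = wienerIndex (SimpleGraph.cycleGraph 11)) ∧
    (∀ v : Fin 11, deltaW (SimpleGraph.cycleGraph 11) v = 0) ∧
    ratioR (SimpleGraph.cycleGraph 11) 0 = 1 := by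
  have h1 : ∀ v : Fin 11, wienerIndex (deleteVert (SimpleGraph.cycleGraph 11) v)
      = wienerIndex (SimpleGraph.cycleGraph 11) := fun v => by
    rw [wiener_del, wiener_cycle]
  have h2 : ∀ v : Fin 11, deltaW (SimpleGraph.cycleGraph 11) v = 0 := fun v => by
    unfold deltaW; rw [wiener_cycle, wiener_del_any]; ring
  refine ⟨h1, h2, ?_⟩
  unfold ratioR
  rw [Finset.filter_true_of_mem (fun v _ => h2 v)]
  simp
end

section
/- Let H = H(n,k,l,n0,t0) with n ≥ 3, k ≥ 2, l ≥ 1, and let v = (0,a) be a cycle vertex with attached copy F_v of F. Then for every other vertex u_i = (i,a) (1 ≤ i ≤ n−1) of the cycle containing v and every vertex w of F_v, the distance strictly increases by 2 after deleting v: d_{H−v}(u_i, w) = d_H(u_i, w) + 2. Consequently the total increase of distances between vertices of the punctured cycle {u_1,…,u_{n−1}} and vertices of F_v equals 2·n0·(n−1). -/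
open scoped Classical

-- generic walk lemmas
private lemma walk_transfer {V V₂ : Type} {G : SimpleGraph V} {G₂ : SimpleGraph V₂}
    (f : V → V₂) (hf : ∀ ⦃x y⦄, G.Adj x y → f x = f y ∨ G₂.Adj (f x) (f y)) :
    ∀ {x y : V}, (p : G.Walk x y) → ∃ q : G₂.Walk (f x) (f y), q.length ≤ p.length := by
  intro x y p
  induction p with
  | nil => exact ⟨SimpleGraph.Walk.nil, by simp⟩
  | @cons x x' y h p ih =>
    obtain ⟨q, hq⟩ := ih
    rcases hf h with he | ha
    · refine ⟨q.copy he.symm rfl, ?_⟩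
      rw [SimpleGraph.Walk.length_copy, SimpleGraph.Walk.length_cons]
      omega
    · refine ⟨SimpleGraph.Walk.cons ha q, ?_⟩
      rw [SimpleGraph.Walk.length_cons, SimpleGraph.Walk.length_cons]
      omega

private lemma potential_le_walk {V : Type} {G : SimpleGraph V} {t : V} (g : V → ℕ)
    (hlip : ∀ ⦃x y⦄, G.Adj x y → g x ≤ g y + 1) (hgt : g t = 0) :
    ∀ {x : V}, (p : G.Walk x t) → g x ≤ p.length := by
  intro x p
  induction p with
  | nil => omega
  | cons h p ih => have := hlip h; rw [SimpleGraph.Walk.length_cons]; omega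

private lemma dist_lip {V : Type} {G : SimpleGraph V} {x y t : V} (h : G.Adj x y)
    (hr : G.Reachable y t) : G.dist x t ≤ G.dist y t + 1 := by
  obtain ⟨p, hp⟩ := hr.exists_walk_length_eq_dist
  have := SimpleGraph.dist_le (SimpleGraph.Walk.cons h p)
  rw [SimpleGraph.Walk.length_cons, hp] at this
  exact this

private lemma cycle_walk_s18 {V₂ : Type} {G₂ : SimpleGraph V₂} {n : ℕ} (hn : 3 ≤ n)
    (vert : Fin n → V₂)
    (hadj : ∀ j j' : Fin n, (j' : ℕ) = ((j : ℕ) + 1) % n → G₂.Adj (vert j) (vert j')) :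
    ∀ j : Fin n, ∃ p : G₂.Walk (vert j) (vert ⟨0, by omega⟩),
      p.length = min (j : ℕ) (n - (j : ℕ)) := by
  have hA : ∀ m : ℕ, ∀ hm : m < n, ∃ p : G₂.Walk (vert ⟨m, hm⟩) (vert ⟨0, by omega⟩),
      p.length = m := by
    intro m
    induction m with
    | zero => exact fun hm => ⟨SimpleGraph.Walk.nil, rfl⟩
    | succ m ih =>
      intro hm
      have hmlt : m < n := by omega
      obtain ⟨p, hp⟩ := ih hmlt
      have hmod : (m + 1 : ℕ) = (m + 1) % n := (Nat.mod_eq_of_lt hm).symm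
      have hadj' : G₂.Adj (vert ⟨m + 1, hm⟩) (vert ⟨m, hmlt⟩) :=
        (hadj ⟨m, hmlt⟩ ⟨m + 1, hm⟩ hmod).symm
      refine ⟨SimpleGraph.Walk.cons hadj' p, ?_⟩
      rw [SimpleGraph.Walk.length_cons, hp]
  have hB : ∀ m : ℕ, ∀ hm : m + 1 ≤ n, ∃ p : G₂.Walk (vert ⟨n - (m + 1), by omega⟩)
      (vert ⟨0, by omega⟩), p.length = m + 1 := by
    intro m
    induction m with
    | zero =>
      intro hm
      have hmod : (0 : ℕ) = ((n - 1) + 1) % n := by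
        have h1 : n - 1 + 1 = n := by omega
        rw [h1, Nat.mod_self]
      have hadj' : G₂.Adj (vert ⟨n - 1, by omega⟩) (vert ⟨0, by omega⟩) :=
        hadj ⟨n - 1, by omega⟩ ⟨0, by omega⟩ hmod
      exact ⟨SimpleGraph.Walk.cons hadj' SimpleGraph.Walk.nil, rfl⟩
    | succ m ih =>
      intro hm
      obtain ⟨p, hp⟩ := ih (by omega)
      have hmod : (n - (m + 1) : ℕ) = ((n - (m + 2)) + 1) % n := by
        have h1 : n - (m + 2) + 1 = n - (m + 1) := by omega
        rw [h1, Nat.mod_eq_of_lt (by omega)]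
      have hadj' : G₂.Adj (vert ⟨n - (m + 2), by omega⟩) (vert ⟨n - (m + 1), by omega⟩) :=
        hadj _ _ hmod
      refine ⟨SimpleGraph.Walk.cons hadj' p, ?_⟩
      rw [SimpleGraph.Walk.length_cons, hp]
  intro j
  rcases le_or_gt (j : ℕ) (n - (j : ℕ)) with hc | hc
  · obtain ⟨p, hp⟩ := hA (j : ℕ) j.isLt
    have hj : (⟨(j : ℕ), j.isLt⟩ : Fin n) = j := rfl
    refine ⟨p.copy (congrArg vert hj) rfl, ?_⟩
    rw [SimpleGraph.Walk.length_copy, hp, Nat.min_eq_left hc]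
  · have hjlt := j.isLt
    obtain ⟨p, hp⟩ := hB (n - (j : ℕ) - 1) (by omega)
    have hj : (⟨n - (n - (j : ℕ) - 1 + 1), by omega⟩ : Fin n) = j := by
      apply Fin.ext; simp only; omega
    refine ⟨p.copy (congrArg vert hj) rfl, ?_⟩
    rw [SimpleGraph.Walk.length_copy, hp, Nat.min_eq_right (by omega)]
    omega

section SolLemmas

variable {n k : ℕ} {VF : Type} {F : SimpleGraph VF} {S : Set VF}

private lemma solGraph_adj (x y : (Fin n × Fin k) ⊕ (Fin n × VF)) :
    (solGraph n k F S).Adj x y ↔ x ≠ y ∧ (solAdjAux F S x y ∨ solAdjAux F S y x) := Iff.rfl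

private lemma adjC (hn : 2 ≤ n) (j j' : Fin n) (b : Fin k)
    (h : (j' : ℕ) = ((j : ℕ) + 1) % n) :
    (solGraph n k F S).Adj (Sum.inl (j, b)) (Sum.inl (j', b)) := by
  refine ⟨?_, Or.inl ⟨rfl, h⟩⟩
  intro he
  simp only [Sum.inl.injEq, Prod.mk.injEq] at he
  have hj := j.isLt
  have := congrArg Fin.val he.1
  rcases Nat.lt_or_ge ((j : ℕ) + 1) n with hlt | hge
  · rw [Nat.mod_eq_of_lt hlt] at h; omega
  · have h2 : (j : ℕ) + 1 = n := by omega
    rw [h2, Nat.mod_self] at h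
    omega

private lemma adjK (j : Fin n) (b : Fin k) (u : VF) (hu : u ∈ S) :
    (solGraph n k F S).Adj (Sum.inl (j, b)) (Sum.inr (j, u)) :=
  ⟨(fun he => by cases he), Or.inl ⟨rfl, hu⟩⟩

private lemma adjF (j : Fin n) (u u' : VF) (h : F.Adj u u') :
    (solGraph n k F S).Adj (Sum.inr (j, u)) (Sum.inr (j, u')) := by
  refine ⟨?_, Or.inl ⟨rfl, h⟩⟩
  intro he
  simp only [Sum.inr.injEq, Prod.mk.injEq] at he
  exact h.ne he.2

-- adjacency elimination
private lemma elimLL {j j' : Fin n} {b b' : Fin k}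
    (h : (solGraph n k F S).Adj (Sum.inl (j, b)) (Sum.inl (j', b'))) :
    b = b' ∧ ((j' : ℕ) = ((j : ℕ) + 1) % n ∨ (j : ℕ) = ((j' : ℕ) + 1) % n) := by
  rcases h with ⟨hne, h | h⟩ <;> simp only [solAdjAux] at h
  · exact ⟨h.1, Or.inl h.2⟩
  · exact ⟨h.1.symm, Or.inr h.2⟩

private lemma elimLR {j j' : Fin n} {b : Fin k} {u : VF}
    (h : (solGraph n k F S).Adj (Sum.inl (j, b)) (Sum.inr (j', u))) :
    j = j' ∧ u ∈ S := by
  rcases h with ⟨hne, h | h⟩ <;> simp only [solAdjAux] at h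
  exact h

private lemma elimRR {j j' : Fin n} {u u' : VF}
    (h : (solGraph n k F S).Adj (Sum.inr (j, u)) (Sum.inr (j', u'))) :
    j = j' ∧ F.Adj u u' := by
  rcases h with ⟨hne, h | h⟩ <;> simp only [solAdjAux] at h
  · exact h
  · exact ⟨h.1.symm, h.2.symm⟩

def solSwap {n k : ℕ} {VF : Type} (b c : Fin k) :
    (Fin n × Fin k) ⊕ (Fin n × VF) → (Fin n × Fin k) ⊕ (Fin n × VF)
  | Sum.inl (j, d) => Sum.inl (j, Equiv.swap b c d)
  | Sum.inr p => Sum.inr p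

private lemma solSwap_adj (b c : Fin k) {x y : (Fin n × Fin k) ⊕ (Fin n × VF)}
    (h : (solGraph n k F S).Adj x y) :
    (solGraph n k F S).Adj (solSwap b c x) (solSwap b c y) := by
  obtain ⟨hne, h'⟩ := h
  rcases x with ⟨j, d⟩ | ⟨j, u⟩ <;> rcases y with ⟨j', d'⟩ | ⟨j', u'⟩ <;>
      simp only [solSwap] <;> refine ⟨?_, ?_⟩
  · intro he
    simp only [Sum.inl.injEq, Prod.mk.injEq] at he
    exact hne (by rw [he.1, (Equiv.swap b c).injective he.2])
  · rcases h' with ⟨h1, h2⟩ | ⟨h1, h2⟩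
    · exact Or.inl ⟨by rw [h1], h2⟩
    · exact Or.inr ⟨by rw [h1], h2⟩
  · exact fun he => by cases he
  · rcases h' with ⟨h1, h2⟩ | h
    · exact Or.inl ⟨h1, h2⟩
    · simp only [solAdjAux] at h
  · exact fun he => by cases he
  · rcases h' with h | ⟨h1, h2⟩
    · simp only [solAdjAux] at h
    · exact Or.inr ⟨h1, h2⟩
  · exact hne
  · exact h'

def solRetr {n k : ℕ} {VF : Type} (hn : 0 < n) (a b0 : Fin k) :
    (Fin n × Fin k) ⊕ (Fin n × VF) → (Fin n × Fin k) ⊕ (Fin n × VF)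
  | Sum.inl (_, b) => Sum.inl (⟨0, hn⟩, if b = a then b0 else b)
  | Sum.inr (_, u) => Sum.inr (⟨0, hn⟩, u)

private lemma solRetr_ne (hn : 0 < n) (a b0 : Fin k) (hb0 : b0 ≠ a)
    (x : (Fin n × Fin k) ⊕ (Fin n × VF)) :
    solRetr hn a b0 x ≠ Sum.inl ((⟨0, hn⟩ : Fin n), a) := by
  rcases x with ⟨j, b⟩ | ⟨j, u⟩ <;> simp only [solRetr]
  · intro he
    simp only [Sum.inl.injEq, Prod.mk.injEq] at he
    rcases he with ⟨-, he⟩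
    by_cases hb : b = a
    · rw [if_pos hb] at he; exact hb0 he
    · rw [if_neg hb] at he; exact hb he
  · exact fun he => by cases he

private lemma solRetr_prop (hn : 0 < n) (a b0 : Fin k)
    {x y : (Fin n × Fin k) ⊕ (Fin n × VF)} (h : (solGraph n k F S).Adj x y) :
    solRetr hn a b0 x = solRetr hn a b0 y ∨
      (solGraph n k F S).Adj (solRetr hn a b0 x) (solRetr hn a b0 y) := by
  rcases x with ⟨j, b⟩ | ⟨j, u⟩ <;> rcases y with ⟨j', b'⟩ | ⟨j', u'⟩
  · obtain ⟨hb, -⟩ := elimLL h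
    exact Or.inl (by subst hb; rfl)
  · obtain ⟨-, hu⟩ := elimLR h
    exact Or.inr (adjK _ _ _ hu)
  · obtain ⟨-, hu⟩ := elimLR h.symm
    exact Or.inr (adjK _ _ _ hu).symm
  · obtain ⟨-, hF⟩ := elimRR h
    exact Or.inr (adjF _ _ _ hF)

end SolLemmas

noncomputable def pot1 {n k : ℕ} {VF : Type} (F : SimpleGraph VF) (S : Set VF)
    (hn : 0 < n) (a : Fin k) (w : VF) : (Fin n × Fin k) ⊕ (Fin n × VF) → ℕ
  | Sum.inl (j, _) => min (j : ℕ) (n - (j : ℕ)) +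
      (solGraph n k F S).dist (Sum.inl (⟨0, hn⟩, a)) (Sum.inr (⟨0, hn⟩, w))
  | Sum.inr (j, u) =>
      if j = (⟨0, hn⟩ : Fin n) then
        (solGraph n k F S).dist (Sum.inr (j, u)) (Sum.inr (⟨0, hn⟩, w))
      else min (j : ℕ) (n - (j : ℕ)) +
        (solGraph n k F S).dist (Sum.inl (⟨0, hn⟩, a)) (Sum.inr (⟨0, hn⟩, w)) + 1

noncomputable def pot2 {n k : ℕ} {VF : Type} [Fintype VF] (F : SimpleGraph VF) (S : Set VF)
    (hn : 0 < n) (a : Fin k) (w : VF)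
    (x : {x : (Fin n × Fin k) ⊕ (Fin n × VF) // x ≠ Sum.inl ((⟨0, hn⟩ : Fin n), a)}) : ℕ :=
  match x.1 with
  | Sum.inl (j, b) => min (j : ℕ) (n - (j : ℕ)) +
      (solGraph n k F S).dist (Sum.inl (⟨0, hn⟩, a)) (Sum.inr (⟨0, hn⟩, w)) +
      (if b = a then 2 else 0)
  | Sum.inr (j, u) =>
      if j = (⟨0, hn⟩ : Fin n) then
        (deleteVert (solGraph n k F S) (Sum.inl (⟨0, hn⟩, a))).dist
          ⟨Sum.inr (j, u), fun he => by cases he⟩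
          ⟨Sum.inr (⟨0, hn⟩, w), fun he => by cases he⟩
      else min (j : ℕ) (n - (j : ℕ)) +
        (solGraph n k F S).dist (Sum.inl (⟨0, hn⟩, a)) (Sum.inr (⟨0, hn⟩, w)) + 1

example {n k : ℕ} {VF : Type} [Fintype VF] (F : SimpleGraph VF) (S : Set VF)
    (hn : 0 < n) (a : Fin k) (w : VF) (j : Fin n) (b : Fin k)
    (h : Sum.inl (j, b) ≠ Sum.inl ((⟨0, hn⟩ : Fin n), a)) :
    pot2 F S hn a w ⟨Sum.inl (j, b), h⟩ = min (j : ℕ) (n - (j : ℕ)) +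
      (solGraph n k F S).dist (Sum.inl (⟨0, hn⟩, a)) (Sum.inr (⟨0, hn⟩, w)) +
      (if b = a then 2 else 0) := rfl

example {n k : ℕ} {VF : Type} (F : SimpleGraph VF) (S : Set VF)
    (hn : 0 < n) (a : Fin k) (w : VF) (j : Fin n) (u : VF) :
    pot1 F S hn a w (Sum.inr (j, u)) = if j = (⟨0, hn⟩ : Fin n) then
        (solGraph n k F S).dist (Sum.inr (j, u)) (Sum.inr (⟨0, hn⟩, w))
      else min (j : ℕ) (n - (j : ℕ)) +
        (solGraph n k F S).dist (Sum.inl (⟨0, hn⟩, a)) (Sum.inr (⟨0, hn⟩, w)) + 1 := rfl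

private lemma sol_dist_key
    (n k : ℕ) {VF : Type} [Fintype VF] (F : SimpleGraph VF) (S : Set VF)
    (hn : 3 ≤ n) (hk : 2 ≤ k) (hSne : S.Nonempty)
    (hconn : ∀ (i : Fin n) (a : Fin k),
      (SimpleGraph.induce (fvSet n k i a) (solGraph n k F S)).Connected)
    (a : Fin k) (i : Fin n) (hi : i ≠ ⟨0, by omega⟩) (w : VF) :
    (deleteVert (solGraph n k F S) (Sum.inl (⟨0, by omega⟩, a))).dist
        ⟨Sum.inl (i, a), by simp [hi]⟩ ⟨Sum.inr (⟨0, by omega⟩, w), by simp⟩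
      = (solGraph n k F S).dist (Sum.inl (i, a)) (Sum.inr (⟨0, by omega⟩, w)) + 2 := by
  have hn0 : 0 < n := by omega
  set G := solGraph n k F S with hGdef
  set z0 : Fin n := ⟨0, hn0⟩ with hz0def
  set v : (Fin n × Fin k) ⊕ (Fin n × VF) := Sum.inl (z0, a) with hvdef
  set tgt : (Fin n × Fin k) ⊕ (Fin n × VF) := Sum.inr (z0, w) with htgtdef
  -- basic helpers
  have cycLip : ∀ j j' : Fin n, (j' : ℕ) = ((j : ℕ) + 1) % n →
      min (j : ℕ) (n - (j : ℕ)) ≤ min (j' : ℕ) (n - (j' : ℕ)) + 1 ∧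
      min (j' : ℕ) (n - (j' : ℕ)) ≤ min (j : ℕ) (n - (j : ℕ)) + 1 := by
    intro j j' h
    have h1 := j.isLt; have h2 := j'.isLt
    rcases Nat.lt_or_ge ((j : ℕ) + 1) n with hlt | hge
    · rw [Nat.mod_eq_of_lt hlt] at h; omega
    · have h3 : (j : ℕ) + 1 = n := by omega
      rw [h3, Nat.mod_self] at h; omega
  -- reachability inside the 0-th copy of F (plus its hub v)
  have reachFv : ∀ x y : (Fin n × Fin k) ⊕ (Fin n × VF),
      x ∈ fvSet n k z0 a → y ∈ fvSet n k z0 a → G.Reachable x y := by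
    intro x y hx hy
    obtain ⟨p⟩ := ((hconn z0 a).preconnected ⟨x, hx⟩ ⟨y, hy⟩)
    obtain ⟨q, -⟩ := walk_transfer (G := SimpleGraph.induce (fvSet n k z0 a) G)
      (G₂ := G) (Subtype.val) (fun x y h => Or.inr h) p
    exact ⟨q⟩
  have hreachD : G.Reachable v tgt := reachFv _ _ (Or.inl rfl) (Or.inr ⟨w, rfl⟩)
  have reachInr : ∀ u : VF, G.Reachable (Sum.inr (z0, u)) tgt :=
    fun u => reachFv _ _ (Or.inr ⟨u, rfl⟩) (Or.inr ⟨w, rfl⟩)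
  -- mapping distances through adjacency-preserving maps
  have distMapLe : ∀ (f : (Fin n × Fin k) ⊕ (Fin n × VF) → (Fin n × Fin k) ⊕ (Fin n × VF)),
      (∀ ⦃x y⦄, G.Adj x y → G.Adj (f x) (f y)) → ∀ x y, G.Reachable x y →
      G.dist (f x) (f y) ≤ G.dist x y ∧ G.Reachable (f x) (f y) := by
    intro f hf x y hr
    obtain ⟨p, hp⟩ := hr.exists_walk_length_eq_dist
    obtain ⟨q, hq⟩ := walk_transfer f (fun x y h => Or.inr (hf h)) p
    exact ⟨(SimpleGraph.dist_le q).trans (by omega), ⟨q⟩⟩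
  -- all hubs at index 0 are at the same distance from tgt
  have distHub : ∀ b : Fin k, G.dist (Sum.inl (z0, b)) tgt = G.dist v tgt ∧
      G.Reachable (Sum.inl (z0, b)) tgt := by
    intro b
    have hf : ∀ ⦃x y⦄, G.Adj x y → G.Adj (solSwap a b x) (solSwap a b y) :=
      fun x y h => solSwap_adj a b h
    have he1 : solSwap a b v = Sum.inl (z0, b) := by
      simp only [hvdef, solSwap, Equiv.swap_apply_left]
    have he2 : solSwap a b tgt = tgt := rfl
    have h1 := distMapLe (solSwap a b) hf v tgt hreachD
    rw [he1, he2] at h1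
    have h2 := distMapLe (solSwap a b) hf (Sum.inl (z0, b)) tgt h1.2
    have he3 : solSwap a b (Sum.inl (z0, b)) = v := by
      simp only [hvdef, solSwap, Equiv.swap_apply_right]
    rw [he3, he2] at h2
    exact ⟨le_antisymm h1.1 h2.1, h1.2⟩
  -- upper bound in G
  have hup1 : ∀ (j : Fin n) (b : Fin k),
      G.dist (Sum.inl (j, b)) tgt ≤ min (j : ℕ) (n - (j : ℕ)) + G.dist v tgt ∧
      G.Reachable (Sum.inl (j, b)) tgt := by
    intro j b
    obtain ⟨p, hp⟩ := cycle_walk_s18 hn (fun j => (Sum.inl (j, b) : (Fin n × Fin k) ⊕ (Fin n × VF)))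
      (fun j j' h => adjC (by omega) j j' b h) j
    obtain ⟨q, hq⟩ := (distHub b).2.exists_walk_length_eq_dist
    refine ⟨?_, ⟨p.append q⟩⟩
    have h1 := SimpleGraph.dist_le (p.append q)
    rw [SimpleGraph.Walk.length_append, hp, hq, (distHub b).1] at h1
    exact h1
  have pot1L : ∀ (j : Fin n) (b : Fin k), pot1 F S hn0 a w (Sum.inl (j, b)) =
      min (j : ℕ) (n - (j : ℕ)) + G.dist v tgt := fun _ _ => rfl
  have pot1R : ∀ (j : Fin n) (u : VF), pot1 F S hn0 a w (Sum.inr (j, u)) =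
      if j = z0 then G.dist (Sum.inr (j, u)) tgt
      else min (j : ℕ) (n - (j : ℕ)) + G.dist v tgt + 1 := fun _ _ => rfl
  have hz0val : ((z0 : Fin n) : ℕ) = 0 := rfl
  -- Lipschitz property of pot1
  have hlip1 : ∀ ⦃x y⦄, G.Adj x y → pot1 F S hn0 a w x ≤ pot1 F S hn0 a w y + 1 := by
    rintro (⟨j, b⟩ | ⟨j, u⟩) (⟨j', b'⟩ | ⟨j', u'⟩) h
    · obtain ⟨-, hm⟩ := elimLL h
      rw [pot1L, pot1L]
      rcases hm with hm | hm
      · have := cycLip j j' hm; omega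
      · have := cycLip j' j hm; omega
    · obtain ⟨heq, hu⟩ := elimLR h
      subst heq
      rw [pot1L, pot1R]
      by_cases hj : j = z0
      · subst hj
        rw [if_pos rfl]
        have h1 : G.dist (Sum.inl (z0, b)) tgt ≤ G.dist (Sum.inr (z0, u')) tgt + 1 :=
          dist_lip (adjK z0 b u' hu) (reachInr u')
        have h2 := (distHub b).1
        omega
      · rw [if_neg hj]; omega
    · obtain ⟨heq, hu⟩ := elimLR h.symm
      subst heq
      rw [pot1R, pot1L]
      by_cases hj : j' = z0
      · subst hj
        rw [if_pos rfl]
        have h1 : G.dist (Sum.inr (z0, u)) tgt ≤ G.dist (Sum.inl (z0, b')) tgt + 1 :=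
          dist_lip (adjK z0 b' u hu).symm (distHub b').2
        have h2 := (distHub b').1
        omega
      · rw [if_neg hj]
    · obtain ⟨heq, hF⟩ := elimRR h
      subst heq
      rw [pot1R, pot1R]
      by_cases hj : j = z0
      · subst hj
        rw [if_pos rfl, if_pos rfl]
        exact dist_lip (adjF z0 u u' hF) (reachInr u')
      · rw [if_neg hj, if_neg hj]; omega
  have hpot1tgt : pot1 F S hn0 a w tgt = 0 := by
    rw [htgtdef, pot1R, if_pos rfl]
    exact SimpleGraph.dist_self
  -- distances in G
  have dist1 : ∀ (j : Fin n) (b : Fin k),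
      G.dist (Sum.inl (j, b)) tgt = min (j : ℕ) (n - (j : ℕ)) + G.dist v tgt := by
    intro j b
    refine le_antisymm (hup1 j b).1 ?_
    obtain ⟨p, hp⟩ := (hup1 j b).2.exists_walk_length_eq_dist
    have h1 := potential_le_walk (pot1 F S hn0 a w) hlip1 hpot1tgt p
    rw [hp, pot1L] at h1
    exact h1
  -- ===== the deleted-vertex graph =====
  obtain ⟨b0, hb0⟩ : ∃ b : Fin k, b ≠ a := by
    refine ⟨⟨if (a : ℕ) = 0 then 1 else 0, by split <;> omega⟩, ?_⟩
    intro h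
    have h2 := congrArg Fin.val h
    simp only at h2
    split at h2 <;> omega
  have hneL : ∀ (j : Fin n) (b' : Fin k), b' ≠ a →
      (Sum.inl (j, b') : (Fin n × Fin k) ⊕ (Fin n × VF)) ≠ v := by
    intro j b' hb' he
    rw [hvdef] at he
    simp only [Sum.inl.injEq, Prod.mk.injEq] at he
    exact hb' he.2
  have hneR : ∀ p : Fin n × VF, (Sum.inr p : (Fin n × Fin k) ⊕ (Fin n × VF)) ≠ v := by
    intro p he
    rw [hvdef] at he
    cases he
  have hial : (Sum.inl (i, a) : (Fin n × Fin k) ⊕ (Fin n × VF)) ≠ v := by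
    intro he
    rw [hvdef] at he
    simp only [Sum.inl.injEq, Prod.mk.injEq] at he
    exact hi he.1
  have hpsi : ∀ (b' : Fin k) (hb' : b' ≠ a) (x y : (Fin n × Fin k) ⊕ (Fin n × VF))
      (p : G.Walk x y),
      ∃ q : (deleteVert G v).Walk ⟨solRetr hn0 a b' x, solRetr_ne hn0 a b' hb' x⟩
        ⟨solRetr hn0 a b' y, solRetr_ne hn0 a b' hb' y⟩, q.length ≤ p.length := by
    intro b' hb' x y p
    exact walk_transfer (G := G) (G₂ := deleteVert G v)
      (fun x => ⟨solRetr hn0 a b' x, solRetr_ne hn0 a b' hb' x⟩)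
      (fun x y h => by
        rcases solRetr_prop hn0 a b' h with he | ha
        · exact Or.inl (Subtype.ext he)
        · exact Or.inr ha) p
  have distHub' : ∀ (b' : Fin k) (hb' : b' ≠ a),
      (deleteVert G v).dist ⟨Sum.inl (z0, b'), hneL z0 b' hb'⟩ ⟨tgt, hneR _⟩
        = G.dist v tgt ∧
      (deleteVert G v).Reachable ⟨Sum.inl (z0, b'), hneL z0 b' hb'⟩ ⟨tgt, hneR _⟩ := by
    intro b' hb'
    obtain ⟨p, hp⟩ := hreachD.exists_walk_length_eq_dist
    obtain ⟨q0, hq0⟩ := hpsi b' hb' v tgt p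
    have he1 : (⟨solRetr hn0 a b' v, solRetr_ne hn0 a b' hb' v⟩ : {x // x ≠ v})
        = ⟨Sum.inl (z0, b'), hneL z0 b' hb'⟩ := by
      refine Subtype.ext ?_
      show solRetr hn0 a b' (Sum.inl (⟨0, hn0⟩, a)) = Sum.inl (⟨0, hn0⟩, b')
      simp [solRetr]
    have he2 : (⟨solRetr hn0 a b' tgt, solRetr_ne hn0 a b' hb' tgt⟩ : {x // x ≠ v})
        = ⟨tgt, hneR _⟩ := Subtype.ext rfl
    have hq : (q0.copy he1 he2).length ≤ G.dist v tgt := by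
      rw [SimpleGraph.Walk.length_copy]
      omega
    constructor
    · refine le_antisymm ((SimpleGraph.dist_le (q0.copy he1 he2)).trans hq) ?_
      obtain ⟨q1, hq1⟩ := (SimpleGraph.Reachable.exists_walk_length_eq_dist ⟨q0.copy he1 he2⟩)
      obtain ⟨p1, hp1⟩ := walk_transfer (G := deleteVert G v) (G₂ := G)
        (Subtype.val) (fun x y h => Or.inr h) q1
      have h2 : G.dist (Sum.inl (z0, b')) tgt ≤ p1.length := SimpleGraph.dist_le p1
      rw [(distHub b').1] at h2
      omega
    · exact ⟨q0.copy he1 he2⟩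
  have reachInr' : ∀ u : VF,
      (deleteVert G v).Reachable ⟨Sum.inr (z0, u), hneR _⟩ ⟨tgt, hneR _⟩ := by
    intro u
    obtain ⟨p⟩ := reachInr u
    obtain ⟨q, -⟩ := hpsi b0 hb0 (Sum.inr (z0, u)) tgt p
    exact ⟨q.copy (Subtype.ext rfl) (Subtype.ext rfl)⟩
  -- upper bound in G'
  have hup2 : (deleteVert G v).dist ⟨Sum.inl (i, a), hial⟩ ⟨tgt, hneR _⟩ ≤
      min (i : ℕ) (n - (i : ℕ)) + G.dist v tgt + 2 ∧
      (deleteVert G v).Reachable ⟨Sum.inl (i, a), hial⟩ ⟨tgt, hneR _⟩ := by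
    obtain ⟨s, hs⟩ := hSne
    have e1 : (deleteVert G v).Adj ⟨Sum.inl (i, a), hial⟩ ⟨Sum.inr (i, s), hneR _⟩ :=
      adjK i a s hs
    have e2 : (deleteVert G v).Adj ⟨Sum.inr (i, s), hneR _⟩
        ⟨Sum.inl (i, b0), hneL i b0 hb0⟩ := (adjK i b0 s hs).symm
    obtain ⟨pc, hpc⟩ := cycle_walk_s18 (G₂ := deleteVert G v) hn
      (fun j => (⟨Sum.inl (j, b0), hneL j b0 hb0⟩ : {x // x ≠ v}))
      (fun j j' hjj => adjC (F := F) (S := S) (by omega) j j' b0 hjj) i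
    obtain ⟨pd, hpd⟩ := (distHub' b0 hb0).2.exists_walk_length_eq_dist
    refine ⟨?_, ⟨SimpleGraph.Walk.cons e1 (SimpleGraph.Walk.cons e2 (pc.append pd))⟩⟩
    have h1 := SimpleGraph.dist_le (SimpleGraph.Walk.cons e1
      (SimpleGraph.Walk.cons e2 (pc.append pd)))
    rw [SimpleGraph.Walk.length_cons, SimpleGraph.Walk.length_cons,
        SimpleGraph.Walk.length_append, hpc, hpd, (distHub' b0 hb0).1] at h1
    omega
  -- pot2 computation lemmas
  have pot2L : ∀ (j : Fin n) (b : Fin k) (h : (Sum.inl (j, b) :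
        (Fin n × Fin k) ⊕ (Fin n × VF)) ≠ v),
      pot2 F S hn0 a w ⟨Sum.inl (j, b), h⟩ =
        min (j : ℕ) (n - (j : ℕ)) + G.dist v tgt + (if b = a then 2 else 0) :=
    fun _ _ _ => rfl
  have pot2R : ∀ (j : Fin n) (u : VF) (h : (Sum.inr (j, u) :
        (Fin n × Fin k) ⊕ (Fin n × VF)) ≠ v),
      pot2 F S hn0 a w ⟨Sum.inr (j, u), h⟩ =
        if j = z0 then (deleteVert G v).dist ⟨Sum.inr (j, u), hneR _⟩ ⟨tgt, hneR _⟩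
        else min (j : ℕ) (n - (j : ℕ)) + G.dist v tgt + 1 :=
    fun _ _ _ => rfl
  -- Lipschitz property of pot2
  have hlip2 : ∀ ⦃x y : {x // x ≠ v}⦄, (deleteVert G v).Adj x y →
      pot2 F S hn0 a w x ≤ pot2 F S hn0 a w y + 1 := by
    rintro ⟨⟨j, b⟩ | ⟨j, u⟩, hx⟩ ⟨⟨j', b'⟩ | ⟨j', u'⟩, hy⟩ h
    · have h' : G.Adj (Sum.inl (j, b)) (Sum.inl (j', b')) := h
      obtain ⟨heq, hm⟩ := elimLL h'
      subst heq
      rw [pot2L, pot2L]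
      have hcyc : min (j : ℕ) (n - (j : ℕ)) ≤ min (j' : ℕ) (n - (j' : ℕ)) + 1 := by
        rcases hm with hm | hm
        · exact (cycLip j j' hm).1
        · exact (cycLip j' j hm).2
      omega
    · have h' : G.Adj (Sum.inl (j, b)) (Sum.inr (j', u')) := h
      obtain ⟨heq, hu⟩ := elimLR h'
      subst heq
      rw [pot2L, pot2R]
      by_cases hj : j = z0
      · subst hj
        have hba : b ≠ a := by
          intro hba
          exact hx (by rw [hba, hvdef])
        rw [if_neg hba, if_pos rfl, hz0val]
        have hadj2 : (deleteVert G v).Adj ⟨Sum.inl (z0, b), hneL z0 b hba⟩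
            ⟨Sum.inr (z0, u'), hneR _⟩ := h'
        have h1 := dist_lip hadj2 (reachInr' u')
        have h2 := (distHub' b hba).1
        omega
      · rw [if_neg hj]
        by_cases hba : b = a
        · rw [if_pos hba]
        · rw [if_neg hba]; omega
    · have h' : G.Adj (Sum.inl (j', b')) (Sum.inr (j, u)) := h.symm
      obtain ⟨heq, hu⟩ := elimLR h'
      subst heq
      rw [pot2R, pot2L]
      by_cases hj : j' = z0
      · subst hj
        have hba : b' ≠ a := by
          intro hba
          exact hy (by rw [hba, hvdef])
        rw [if_neg hba, if_pos rfl, hz0val]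
        have hadj2 : (deleteVert G v).Adj ⟨Sum.inr (z0, u), hneR _⟩
            ⟨Sum.inl (z0, b'), hneL z0 b' hba⟩ := h
        have h1 := dist_lip hadj2 (distHub' b' hba).2
        have h2 := (distHub' b' hba).1
        omega
      · rw [if_neg hj]
        by_cases hba : b' = a
        · rw [if_pos hba]; omega
        · rw [if_neg hba]
    · have h' : G.Adj (Sum.inr (j, u)) (Sum.inr (j', u')) := h
      obtain ⟨heq, hF⟩ := elimRR h'
      subst heq
      rw [pot2R, pot2R]
      by_cases hj : j = z0
      · subst hj
        rw [if_pos rfl, if_pos rfl]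
        have hadj2 : (deleteVert G v).Adj ⟨Sum.inr (z0, u), hneR _⟩
            ⟨Sum.inr (z0, u'), hneR _⟩ := h
        exact dist_lip hadj2 (reachInr' u')
      · rw [if_neg hj, if_neg hj]
        omega
  have hpot2tgt : pot2 F S hn0 a w ⟨tgt, hneR _⟩ = 0 := by
    have : (⟨tgt, hneR _⟩ : {x // x ≠ v}) = ⟨Sum.inr (z0, w), hneR _⟩ := rfl
    rw [this, pot2R, if_pos rfl]
    exact SimpleGraph.dist_self
  -- lower bound in G'
  have low2 : min (i : ℕ) (n - (i : ℕ)) + G.dist v tgt + 2 ≤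
      (deleteVert G v).dist ⟨Sum.inl (i, a), hial⟩ ⟨tgt, hneR _⟩ := by
    obtain ⟨p, hp⟩ := hup2.2.exists_walk_length_eq_dist
    have h1 := potential_le_walk (G := deleteVert G v) (pot2 F S hn0 a w) hlip2 hpot2tgt p
    rw [hp, pot2L, if_pos rfl] at h1
    exact h1
  have dist2 : (deleteVert G v).dist ⟨Sum.inl (i, a), hial⟩ ⟨tgt, hneR _⟩ =
      min (i : ℕ) (n - (i : ℕ)) + G.dist v tgt + 2 := le_antisymm hup2.1 low2
  have hfinal : (deleteVert G v).dist ⟨Sum.inl (i, a), hial⟩ ⟨tgt, hneR _⟩ =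
      G.dist (Sum.inl (i, a)) tgt + 2 := by
    rw [dist2, dist1 i a]
  exact hfinal

theorem stmt_18 (n k l n0 : ℕ) {VF : Type} [Fintype VF] (F : SimpleGraph VF)
    (S : Set VF) (hn : 3 ≤ n) (hk : 2 ≤ k) (hl : 1 ≤ l) (hS : S.ncard = l)
    (hn0 : Fintype.card VF = n0)
    (hconn : ∀ (i : Fin n) (a : Fin k),
      (SimpleGraph.induce (fvSet n k i a) (solGraph n k F S)).Connected)
    (a : Fin k) :
    (∀ (i : Fin n) (hi : i ≠ ⟨0, by omega⟩) (w : VF),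
      (deleteVert (solGraph n k F S) (Sum.inl (⟨0, by omega⟩, a))).dist
          ⟨Sum.inl (i, a), by simp [hi]⟩ ⟨Sum.inr (⟨0, by omega⟩, w), by simp⟩
        = (solGraph n k F S).dist (Sum.inl (i, a)) (Sum.inr (⟨0, by omega⟩, w)) + 2) ∧
    (∑ i : {i : Fin n // i ≠ ⟨0, by omega⟩}, ∑ w : VF,
        (deleteVert (solGraph n k F S) (Sum.inl (⟨0, by omega⟩, a))).dist
          ⟨Sum.inl (i.1, a), by simp [i.2]⟩ ⟨Sum.inr (⟨0, by omega⟩, w), by simp⟩)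
      = (∑ i : {i : Fin n // i ≠ ⟨0, by omega⟩}, ∑ w : VF,
          (solGraph n k F S).dist (Sum.inl (i.1, a)) (Sum.inr (⟨0, by omega⟩, w)))
        + 2 * n0 * (n - 1) := by
  have hSne : S.Nonempty := Set.nonempty_of_ncard_ne_zero (by omega)
  have key : ∀ (i : Fin n) (hi : i ≠ ⟨0, by omega⟩) (w : VF),
      (deleteVert (solGraph n k F S) (Sum.inl (⟨0, by omega⟩, a))).dist
          ⟨Sum.inl (i, a), by simp [hi]⟩ ⟨Sum.inr (⟨0, by omega⟩, w), by simp⟩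
        = (solGraph n k F S).dist (Sum.inl (i, a)) (Sum.inr (⟨0, by omega⟩, w)) + 2 :=
    fun i hi w => sol_dist_key n k F S hn hk hSne hconn a i hi w
  refine ⟨key, ?_⟩
  have h1 : ∀ i : {i : Fin n // i ≠ (⟨0, by omega⟩ : Fin n)},
      (∑ w : VF, (deleteVert (solGraph n k F S) (Sum.inl (⟨0, by omega⟩, a))).dist
          ⟨Sum.inl (i.1, a), by simp [i.2]⟩ ⟨Sum.inr (⟨0, by omega⟩, w), by simp⟩)
      = (∑ w : VF, (solGraph n k F S).dist (Sum.inl (i.1, a))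
          (Sum.inr (⟨0, by omega⟩, w))) + 2 * n0 := by
    intro i
    rw [Finset.sum_congr rfl (fun w _ => key i.1 i.2 w), Finset.sum_add_distrib,
      Finset.sum_const, Finset.card_univ, hn0, smul_eq_mul]
    ring
  rw [Finset.sum_congr rfl (fun i _ => h1 i), Finset.sum_add_distrib,
    Finset.sum_const, Finset.card_univ]
  have hcard : Fintype.card {i : Fin n // i ≠ (⟨0, by omega⟩ : Fin n)} = n - 1 := by
    simp [ne_eq, Fintype.card_subtype_compl]
  rw [hcard, smul_eq_mul]
  ring
end

section
/- Let H = H(n,k,l,n0,t0) with n ≥ 3, k ≥ 2, l ≥ 1, let v = (0,a) be a cycle vertex, and let P = {(1,a),…,(n−1,a)} be the remaining vertices of the cycle containing v. Then no shortest path in H between vertices outside the cycle of v needs v: (i) for all vertices x, y of H other than v with x, y ∉ P, d_{H−v}(x,y) = d_H(x,y); and (ii) for every x ∈ P and every cycle vertex y = (j,b) with b ≠ a, d_{H−v}(x,y) = d_H(x,y). -/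
open scoped Classical

-- ==================== auxiliary development ====================

/-- cyclic distance on `ℕ` mod `n` -/
def dcyc (n i j : ℕ) : ℕ := min ((j + n - i) % n) ((i + n - j) % n)

lemma dmod {n i j : ℕ} (hi : i < n) (hj : j < n) :
    (j + n - i) % n = if i ≤ j then j - i else j + n - i := by
  split_ifs with h
  · have e : j + n - i = (j - i) + n := by omega
    rw [e, Nat.add_mod_right, Nat.mod_eq_of_lt (by omega)]
  · exact Nat.mod_eq_of_lt (by omega)

lemma dcyc_self {n i : ℕ} (hi : i < n) : dcyc n i i = 0 := by
  unfold dcyc; rw [dmod hi hi]; simp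

lemma succ_ne_mod {n i : ℕ} (hn : 3 ≤ n) (hi : i < n) : (i + 1) % n ≠ i := by
  rcases Nat.lt_or_ge (i + 1) n with h | h
  · rw [Nat.mod_eq_of_lt h]; omega
  · have e : i + 1 = n := by omega
    rw [e, Nat.mod_self]; omega

lemma dstep {n i j t : ℕ} (hn : 3 ≤ n) (hi : i < n) (ht : t < n) (hj : j = (i + 1) % n) :
    dcyc n i t ≤ dcyc n j t + 1 ∧ dcyc n j t ≤ dcyc n i t + 1 := by
  rcases Nat.lt_or_ge (i + 1) n with h | h
  · have hj' : j = i + 1 := by rw [hj, Nat.mod_eq_of_lt h]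
    subst hj'
    unfold dcyc
    rw [dmod hi ht, dmod ht hi, dmod (by omega) ht, dmod ht (by omega)]
    split_ifs <;> omega
  · have hin : i + 1 = n := by omega
    have hj' : j = 0 := by rw [hj, hin, Nat.mod_self]
    subst hj'
    unfold dcyc
    rw [dmod hi ht, dmod ht hi, dmod (by omega) ht, dmod ht (by omega)]
    split_ifs <;> omega

def solIdx {n k : ℕ} {VF : Type} : (Fin n × Fin k) ⊕ (Fin n × VF) → ℕ
  | Sum.inl (i, _) => i.val
  | Sum.inr (i, _) => i.val

def gB {n k : ℕ} {VF : Type} (b : Fin k) : (Fin n × Fin k) ⊕ (Fin n × VF) → ℕ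
  | Sum.inl (_, c) => if c = b then 0 else 2
  | Sum.inr _ => 1

lemma solStep {n k : ℕ} {VF : Type} {F : SimpleGraph VF} {S : Set VF}
    (hn : 3 ≤ n) (b : Fin k) {t : ℕ} (ht : t < n)
    {x y : (Fin n × Fin k) ⊕ (Fin n × VF)} (h : (solGraph n k F S).Adj x y) :
    dcyc n (solIdx x) t + gB b x ≤ dcyc n (solIdx y) t + gB b y + 1 := by
  obtain ⟨hne, h2⟩ := h
  rcases x with ⟨ix, cx⟩ | ⟨ix, ux⟩ <;> rcases y with ⟨iy, cy⟩ | ⟨iy, uy⟩ <;>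
    simp only [solAdjAux, solIdx, gB] at h2 ⊢
  · rcases h2 with ⟨hc, hst⟩ | ⟨hc, hst⟩
    · subst hc
      have hd := dstep hn ix.isLt ht hst
      omega
    · subst hc
      have hd := dstep hn iy.isLt ht hst
      omega
  · rcases h2 with ⟨hi, -⟩ | hf
    · rw [hi]; split_ifs <;> omega
    · exact absurd hf id
  · rcases h2 with hf | ⟨hi, -⟩
    · exact absurd hf id
    · rw [hi]; split_ifs <;> omega
  · rcases h2 with ⟨hi, -⟩ | ⟨hi, -⟩ <;> rw [hi] <;> omega

lemma solLower {n k : ℕ} {VF : Type} {F : SimpleGraph VF} {S : Set VF}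
    (hn : 3 ≤ n) (b : Fin k) {y : (Fin n × Fin k) ⊕ (Fin n × VF)} :
    ∀ {x : (Fin n × Fin k) ⊕ (Fin n × VF)}
      (W : (solGraph n k F S).Walk x y),
      dcyc n (solIdx x) (solIdx y) + gB b x ≤ W.length + gB b y := by
  have ht : solIdx y < n := by rcases y with ⟨i, c⟩ | ⟨i, u⟩ <;> exact i.isLt
  intro x W
  induction W with
  | nil => simp [dcyc_self ht]
  | cons h W ih =>
    have hs := solStep hn b ht h
    simp only [SimpleGraph.Walk.length_cons]
    omega

lemma sol_adj_cycle {n k : ℕ} {VF : Type} {F : SimpleGraph VF} {S : Set VF}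
    (hn : 3 ≤ n) (i : Fin n) (c : Fin k) :
    (solGraph n k F S).Adj (Sum.inl (i, c))
      (Sum.inl (⟨(i.val + 1) % n, Nat.mod_lt _ (by omega)⟩, c)) := by
  refine ⟨?_, Or.inl ⟨rfl, rfl⟩⟩
  intro hEq
  have h1 : i = (⟨(i.val + 1) % n, Nat.mod_lt _ (by omega)⟩ : Fin n) := by
    simpa using hEq
  have := congrArg Fin.val h1
  exact succ_ne_mod hn i.isLt this.symm

lemma solWalkF {n k : ℕ} {VF : Type} {F : SimpleGraph VF} {S : Set VF}
    (hn : 3 ≤ n) (c : Fin k) :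
    ∀ (m : ℕ) (i j : Fin n), j.val = (i.val + m) % n →
      ∃ W : (solGraph n k F S).Walk (Sum.inl (i, c)) (Sum.inl (j, c)),
        W.length = m ∧ ∀ z ∈ W.support, ∃ t : Fin n, z = Sum.inl (t, c) := by
  intro m
  induction m with
  | zero =>
    intro i j hj
    have hji : j = i := Fin.ext (by rw [hj, Nat.add_zero, Nat.mod_eq_of_lt i.isLt])
    subst hji
    exact ⟨SimpleGraph.Walk.nil, rfl, by intro z hz; simp at hz; exact ⟨j, hz⟩⟩
  | succ m ih =>
    intro i j hj
    have hlt : (i.val + 1) % n < n := Nat.mod_lt _ (by omega)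
    obtain ⟨W, hW1, hW2⟩ := ih ⟨(i.val + 1) % n, hlt⟩ j (by
      show j.val = ((i.val + 1) % n + m) % n
      rw [Nat.mod_add_mod, hj]
      congr 1
      omega)
    refine ⟨SimpleGraph.Walk.cons (sol_adj_cycle hn i c) W, by simp [hW1], ?_⟩
    intro z hz
    rw [SimpleGraph.Walk.support_cons] at hz
    rcases List.mem_cons.mp hz with rfl | hz
    · exact ⟨i, rfl⟩
    · exact hW2 z hz

lemma solWalkCyc {n k : ℕ} {VF : Type} {F : SimpleGraph VF} {S : Set VF}
    (hn : 3 ≤ n) (c : Fin k) (i j : Fin n) :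
    ∃ W : (solGraph n k F S).Walk (Sum.inl (i, c)) (Sum.inl (j, c)),
      W.length = dcyc n i.val j.val ∧ ∀ z ∈ W.support, ∃ t : Fin n, z = Sum.inl (t, c) := by
  have hA : (i.val + (j.val + n - i.val) % n) % n = j.val := by
    rw [Nat.add_comm i.val _, Nat.mod_add_mod]
    have e : j.val + n - i.val + i.val = j.val + n := by omega
    rw [e, Nat.add_mod_right, Nat.mod_eq_of_lt j.isLt]
  have hB : (j.val + (i.val + n - j.val) % n) % n = i.val := by
    rw [Nat.add_comm j.val _, Nat.mod_add_mod]
    have e : i.val + n - j.val + j.val = i.val + n := by omega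
    rw [e, Nat.add_mod_right, Nat.mod_eq_of_lt i.isLt]
  rcases le_total ((j.val + n - i.val) % n) ((i.val + n - j.val) % n) with h | h
  · obtain ⟨W, h1, h2⟩ := solWalkF (F := F) (S := S) hn c ((j.val + n - i.val) % n) i j hA.symm
    exact ⟨W, by rw [h1]; exact (min_eq_left h).symm, h2⟩
  · obtain ⟨W, h1, h2⟩ := solWalkF (F := F) (S := S) hn c ((i.val + n - j.val) % n) j i hB.symm
    refine ⟨W.reverse, ?_, ?_⟩
    · rw [SimpleGraph.Walk.length_reverse, h1]
      exact (min_eq_right h).symm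
    · intro z hz
      exact h2 z (by simpa using hz)

lemma liftWalk {V : Type} [Fintype V] (G : SimpleGraph V) (v : V) :
    ∀ {x y : V} (W : G.Walk x y), (∀ z ∈ W.support, z ≠ v) →
      ∀ (hx : x ≠ v) (hy : y ≠ v),
      ∃ W' : (deleteVert G v).Walk ⟨x, hx⟩ ⟨y, hy⟩, W'.length = W.length := by
  intro x y W
  induction W with
  | nil => intro _ hx hy; exact ⟨SimpleGraph.Walk.nil, rfl⟩
  | @cons x z y h W ih =>
    intro hs hx hy
    have hz : z ≠ v := hs z (by simp)
    obtain ⟨W', hW'⟩ := ih (fun w hw => hs w (by simp [hw])) hz hy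
    exact ⟨SimpleGraph.Walk.cons (by exact h) W', by exact congrArg (· + 1) hW'⟩

def delHom {V : Type} [Fintype V] (G : SimpleGraph V) (v : V) :
    deleteVert G v →g G :=
  ⟨Subtype.val, fun {a b} h => h⟩

lemma dist_del_eq {V : Type} [Fintype V] (G : SimpleGraph V) (v : V) {x y : V}
    (hx : x ≠ v) (hy : y ≠ v) {L : ℕ}
    (W' : (deleteVert G v).Walk ⟨x, hx⟩ ⟨y, hy⟩) (hW' : W'.length = L)
    (hL : L = G.dist x y) :
    (deleteVert G v).dist ⟨x, hx⟩ ⟨y, hy⟩ = G.dist x y := by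
  refine le_antisymm (by rw [← hL, ← hW']; exact SimpleGraph.dist_le W') ?_
  obtain ⟨Wd, hWd⟩ := (W'.reachable).exists_walk_length_eq_dist
  rw [← hWd]
  have h1 : G.dist x y ≤ (Wd.map (delHom G v)).length := SimpleGraph.dist_le _
  rwa [SimpleGraph.Walk.length_map] at h1

def cycMap {n k : ℕ} {VF : Type} (a b0 : Fin k) :
    (Fin n × Fin k) ⊕ (Fin n × VF) → (Fin n × Fin k) ⊕ (Fin n × VF)
  | Sum.inl (i, c) => Sum.inl (i, if c = a then b0 else c)
  | Sum.inr z => Sum.inr z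

lemma cycMap_ne {n k : ℕ} {VF : Type} (a b0 : Fin k) (hb0 : b0 ≠ a)
    (x : (Fin n × Fin k) ⊕ (Fin n × VF)) (i : Fin n) :
    cycMap (VF := VF) a b0 x ≠ Sum.inl (i, a) := by
  rcases x with ⟨ix, cx⟩ | z
  · simp only [cycMap]
    intro h
    rw [Sum.inl.injEq, Prod.mk.injEq] at h
    rcases h with ⟨-, h2⟩
    split_ifs at h2 with hc
    · exact hb0 h2
    · exact hc h2
  · simp [cycMap]

lemma cycMap_fix {n k : ℕ} {VF : Type} {a : Fin k} (b0 : Fin k)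
    {x : (Fin n × Fin k) ⊕ (Fin n × VF)} (hx : ∀ i : Fin n, x ≠ Sum.inl (i, a)) :
    cycMap a b0 x = x := by
  rcases x with ⟨i, c⟩ | z
  · have hc : c ≠ a := by
      intro h; exact hx i (by rw [h])
    simp [cycMap, if_neg hc]
  · rfl

lemma cycMap_adj {n k : ℕ} {VF : Type} {F : SimpleGraph VF} {S : Set VF}
    {a b0 : Fin k} {x y : (Fin n × Fin k) ⊕ (Fin n × VF)}
    (h : (solGraph n k F S).Adj x y) :
    (solGraph n k F S).Adj (cycMap a b0 x) (cycMap a b0 y) := by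
  obtain ⟨hne, h2⟩ := h
  rcases x with ⟨ix, cx⟩ | ⟨ix, ux⟩ <;> rcases y with ⟨iy, cy⟩ | ⟨iy, uy⟩ <;>
    simp only [solAdjAux, cycMap] at h2 ⊢
  · have hc : cx = cy := by
      rcases h2 with ⟨hc, -⟩ | ⟨hc, -⟩
      · exact hc
      · exact hc.symm
    subst hc
    refine ⟨?_, ?_⟩
    · intro hEq
      apply hne
      rw [Sum.inl.injEq, Prod.mk.injEq] at hEq
      rw [Sum.inl.injEq, Prod.mk.injEq]
      exact ⟨hEq.1, rfl⟩
    · rcases h2 with ⟨-, hst⟩ | ⟨-, hst⟩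
      · exact Or.inl ⟨rfl, hst⟩
      · exact Or.inr ⟨rfl, hst⟩
  · rcases h2 with ⟨hi, hu⟩ | hf
    · exact ⟨by simp, Or.inl ⟨hi, hu⟩⟩
    · exact absurd hf id
  · rcases h2 with hf | ⟨hi, hu⟩
    · exact absurd hf id
    · exact ⟨by simp, Or.inr ⟨hi, hu⟩⟩
  · exact ⟨hne, h2⟩

lemma solReach {n k : ℕ} {VF : Type} {F : SimpleGraph VF} {S : Set VF}
    (hn : 3 ≤ n) (a : Fin k) (hSne : S.Nonempty)
    (hconn : ∀ (i : Fin n) (c : Fin k),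
      (SimpleGraph.induce (fvSet n k i c) (solGraph n k F S)).Connected) :
    ∀ x y, (solGraph n k F S).Reachable x y := by
  obtain ⟨u, hu⟩ := hSne
  have key : ∀ x, ∃ i : Fin n, (solGraph n k F S).Reachable x (Sum.inl (i, a)) := by
    intro x
    rcases x with ⟨i, c⟩ | ⟨i, w⟩
    · refine ⟨i, ?_⟩
      have h1 : (solGraph n k F S).Adj (Sum.inl (i, c)) (Sum.inr (i, u)) :=
        ⟨by simp, Or.inl ⟨rfl, hu⟩⟩
      have h2 : (solGraph n k F S).Adj (Sum.inr (i, u)) (Sum.inl (i, a)) :=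
        ⟨by simp, Or.inr ⟨rfl, hu⟩⟩
      exact h1.reachable.trans h2.reachable
    · refine ⟨i, ?_⟩
      have hmem1 : (Sum.inr (i, w) : (Fin n × Fin k) ⊕ (Fin n × VF)) ∈ fvSet n k i a :=
        Or.inr ⟨w, rfl⟩
      have hmem2 : (Sum.inl (i, a) : (Fin n × Fin k) ⊕ (Fin n × VF)) ∈ fvSet n k i a :=
        Or.inl rfl
      have hc := (hconn i a).preconnected ⟨_, hmem1⟩ ⟨_, hmem2⟩
      exact hc.map (SimpleGraph.Embedding.induce (fvSet n k i a)).toHom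
  intro x y
  obtain ⟨ix, hx⟩ := key x
  obtain ⟨iy, hy⟩ := key y
  obtain ⟨W, -, -⟩ := solWalkCyc (F := F) (S := S) hn a ix iy
  exact hx.trans (W.reachable.trans hy.symm)

theorem stmt_19 (n k l : ℕ) {VF : Type} [Fintype VF] (F : SimpleGraph VF)
    (S : Set VF) (hn : 3 ≤ n) (hk : 2 ≤ k) (hl : 1 ≤ l) (hS : S.ncard = l)
    (hconn : ∀ (i : Fin n) (a : Fin k),
      (SimpleGraph.induce (fvSet n k i a) (solGraph n k F S)).Connected)
    (a : Fin k) :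
    (∀ (x y : (Fin n × Fin k) ⊕ (Fin n × VF))
        (hx : ∀ i : Fin n, x ≠ Sum.inl (i, a)) (hy : ∀ i : Fin n, y ≠ Sum.inl (i, a)),
      (deleteVert (solGraph n k F S) (Sum.inl (⟨0, by omega⟩, a))).dist
          ⟨x, hx ⟨0, by omega⟩⟩ ⟨y, hy ⟨0, by omega⟩⟩
        = (solGraph n k F S).dist x y) ∧
    (∀ (i : Fin n) (hi : i ≠ ⟨0, by omega⟩) (j : Fin n) (b : Fin k) (hb : b ≠ a),
      (deleteVert (solGraph n k F S) (Sum.inl (⟨0, by omega⟩, a))).dist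
          ⟨Sum.inl (i, a), by simp [hi]⟩ ⟨Sum.inl (j, b), by simp [hb]⟩
        = (solGraph n k F S).dist (Sum.inl (i, a)) (Sum.inl (j, b))) := by
  classical
  have h0n : 0 < n := by omega
  have hSne : S.Nonempty := Set.nonempty_of_ncard_ne_zero (by rw [hS]; omega)
  have hreach := solReach (F := F) (S := S) hn a hSne hconn
  set G := solGraph n k F S with hGdef
  set v0 : (Fin n × Fin k) ⊕ (Fin n × VF) := Sum.inl (⟨0, h0n⟩, a) with hv0
  constructor
  · intro x y hx hy
    have hxv : x ≠ v0 := hx ⟨0, h0n⟩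
    have hyv : y ≠ v0 := hy ⟨0, h0n⟩
    obtain ⟨b0, hb0⟩ := Fintype.exists_ne_of_one_lt_card
      (by simpa using (by omega : 1 < k)) a
    obtain ⟨W, hW⟩ := (hreach x y).exists_walk_length_eq_dist
    let φ : G →g G := ⟨cycMap a b0, fun h => cycMap_adj h⟩
    have hfx : cycMap (VF := VF) a b0 x = x := cycMap_fix b0 hx
    have hfy : cycMap (VF := VF) a b0 y = y := cycMap_fix b0 hy
    let W2 : G.Walk x y := (W.map φ).copy hfx hfy
    have hW2len : W2.length = G.dist x y := by
      simp only [W2, SimpleGraph.Walk.length_copy, SimpleGraph.Walk.length_map]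
      exact hW
    have hW2sup : ∀ z ∈ W2.support, z ≠ v0 := by
      intro z hz
      simp only [W2, SimpleGraph.Walk.support_copy, SimpleGraph.Walk.support_map] at hz
      obtain ⟨w, -, rfl⟩ := List.mem_map.mp hz
      exact cycMap_ne a b0 hb0 w _
    obtain ⟨W', hW'⟩ := liftWalk G v0 W2 hW2sup hxv hyv
    exact dist_del_eq G v0 hxv hyv W' (hW'.trans hW2len) rfl
  · intro i hi j b hb
    have hiv : (Sum.inl (i, a) : (Fin n × Fin k) ⊕ (Fin n × VF)) ≠ v0 := by
      intro h
      rw [hv0, Sum.inl.injEq, Prod.mk.injEq] at h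
      exact hi h.1
    have hjv : (Sum.inl (j, b) : (Fin n × Fin k) ⊕ (Fin n × VF)) ≠ v0 := by
      intro h
      rw [hv0, Sum.inl.injEq, Prod.mk.injEq] at h
      exact hb h.2
    obtain ⟨u, hu⟩ := hSne
    obtain ⟨Wc, hc1, hc2⟩ := solWalkCyc (F := F) (S := S) hn b i j
    have h1 : G.Adj (Sum.inl (i, a)) (Sum.inr (i, u)) := ⟨by simp, Or.inl ⟨rfl, hu⟩⟩
    have h2 : G.Adj (Sum.inr (i, u)) (Sum.inl (i, b)) := ⟨by simp, Or.inr ⟨rfl, hu⟩⟩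
    let W0 : G.Walk (Sum.inl (i, a)) (Sum.inl (j, b)) :=
      SimpleGraph.Walk.cons h1 (SimpleGraph.Walk.cons h2 Wc)
    have hlen : W0.length = dcyc n i.val j.val + 2 := by
      simp only [W0, SimpleGraph.Walk.length_cons, hc1]
    have hge : dcyc n i.val j.val + 2 ≤ G.dist (Sum.inl (i, a)) (Sum.inl (j, b)) := by
      obtain ⟨W, hW⟩ := (hreach (Sum.inl (i, a)) (Sum.inl (j, b))).exists_walk_length_eq_dist
      have hlow := solLower hn b W
      have hab : a ≠ b := fun h => hb h.symm
      simp only [solIdx, gB, if_pos rfl, if_neg hab, if_true] at hlow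
      omega
    have hdist : G.dist (Sum.inl (i, a)) (Sum.inl (j, b)) = dcyc n i.val j.val + 2 :=
      le_antisymm (hlen ▸ SimpleGraph.dist_le W0) hge
    have hsup : ∀ z ∈ W0.support, z ≠ v0 := by
      intro z hz
      simp only [W0, SimpleGraph.Walk.support_cons, List.mem_cons] at hz
      rcases hz with rfl | rfl | hz
      · exact hiv
      · simp [hv0]
      · obtain ⟨t, rfl⟩ := hc2 z hz
        intro hEq
        rw [hv0, Sum.inl.injEq, Prod.mk.injEq] at hEq
        exact hb hEq.2
    obtain ⟨W', hW'⟩ := liftWalk G v0 W0 hsup hiv hjv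
    exact dist_del_eq G v0 hiv hjv W' (hW'.trans (hlen.trans hdist.symm)) rfl
end
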